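/- arXiv:1507.02414 — 3 statements merged into one kernel-verified Lean document; each statement's English description precedes it below -/
import Mathlib

section
/- Let Ĉ be a set of right-to-left requests on the path {1,…,n} and let C* = {(s*₁,t*₁),…,(s*_h,t*_h)} be the output of Normalize on Ĉ. Define, for v a node, T¹_v(D) = {(s,t) ∈ D : t = v < s}, T²_v(D) = {(s,t) ∈ D : t < v < s}, T³_v(D) = {(s,t) ∈ D : t < v = s}, L(D) = {v : T¹_v(D) ≠ ∅ and T²_v(D) = T³_v(D) = ∅}, R(D) = {v : T¹_v(D) = T²_v(D) = ∅ and T³_v(D) ≠ ∅}. Then L(Ĉ) = {t*₁,…,t*_h} and R(Ĉ) = {s*₁,…,s*_h}. -/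
namespace RideSharing

/-- A ride in a graph with adjacency `adj`: a nonempty sequence of nodes where
consecutive nodes are adjacent. -/
def IsRide (adj : ℕ → ℕ → Prop) (π : List ℕ) : Prop :=
  π ≠ [] ∧ π.Chain' adj

/-- The cost of a ride: sum of the weights of traversed edges. -/
def cost (w : ℕ → ℕ → ℚ) : List ℕ → ℚ
  | [] => 0
  | [_] => 0
  | a :: b :: rest => w a b + cost w (b :: rest)

/-- A ride satisfies a request `(s,t)` if `s` occurs at a time step weakly before
an occurrence of `t`. -/
def Satisfies (π : List ℕ) (s t : ℕ) : Prop :=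
  ∃ i j : ℕ, i ≤ j ∧ π[i]? = some s ∧ π[j]? = some t

/-- `Pre π' π` : `π'` is obtained from `π` by (repeatedly) removing a contiguous
subsequence of nodes (the relation `π' ⪯ π` of the paper, stated with 0-based indices:
`π[1,i] , π[i',len]` becomes `π.take (i+1) ++ π.drop i'`). -/
inductive Pre : List ℕ → List ℕ → Prop
  | refl (π : List ℕ) : Pre π π
  | step (π' π : List ℕ) (i i' : ℕ) :
      i < i' → i' < π.length →
      (π[i + 1]? = π[i']? ∨ π[i]? = π[i' - 1]?) →
      Pre π' (π.take (i + 1) ++ π.drop i') → Pre π' π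

/-- A ride-sharing scenario. -/
structure Scenario where
  adj : ℕ → ℕ → Prop
  w : ℕ → ℕ → ℚ
  s0 : ℕ
  t0 : ℕ
  C : Finset (ℕ × ℕ)

def Feasible (R : Scenario) (π : List ℕ) : Prop :=
  IsRide R.adj π ∧ π.head? = some R.s0 ∧ π.getLast? = some R.t0 ∧
    ∀ r ∈ R.C, Satisfies π r.1 r.2

def Optimal (R : Scenario) (π : List ℕ) : Prop :=
  Feasible R π ∧ ∀ π', Feasible R π' → cost R.w π ≤ cost R.w π'

/-- The set `V_C` of endpoints of requests. -/
def VC (C : Finset (ℕ × ℕ)) : Finset ℕ := C.image Prod.fst ∪ C.image Prod.snd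

/-- The path graph on `{1,…,n}`. -/
def pathAdj (n : ℕ) (a b : ℕ) : Prop :=
  (b = a + 1 ∨ a = b + 1) ∧ 1 ≤ a ∧ a ≤ n ∧ 1 ≤ b ∧ b ≤ n

/-- The monotone segment of the path from `x` to `y`. -/
def seg (x y : ℕ) : List ℕ :=
  if x ≤ y then (List.range (y - x + 1)).map (fun k => x + k)
  else (List.range (x - y + 1)).map (fun k => x - k)

/-- The ride through a list of waypoints, concatenating monotone segments. -/
def rideThrough : List ℕ → List ℕ
  | [] => []
  | [x] => [x]
  | x :: y :: rest => seg x y ++ (rideThrough (y :: rest)).tail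

/-- Concatenation of rides (`π ↦ π'`), inserting the monotone connecting segment
if the endpoints differ. -/
def rconcat (a b : List ℕ) : List ℕ :=
  a ++ (seg (a.getLastD 0) (b.headD 0)).tail ++ b.tail


/-- One merge step of `Normalize`: two distinct right-to-left requests with
`t' ≤ t ≤ s' ≤ s` are replaced by `(s,t')`. -/
def MergeStep (D D' : Finset (ℕ × ℕ)) : Prop :=
  ∃ s t s' t', (s, t) ∈ D ∧ (s', t') ∈ D ∧ (s, t) ≠ (s', t') ∧
    t < s ∧ t' < s' ∧ t' ≤ t ∧ t ≤ s' ∧ s' ≤ s ∧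
    D' = insert (s, t') ((D.erase (s, t)).erase (s', t'))

/-- One drop step of `Normalize`: a request `(s,t)` dominated by a distinct
`(s',t')` with `t' ≤ t < s ≤ s'` is removed. -/
def DropStep (D D' : Finset (ℕ × ℕ)) : Prop :=
  ∃ s t s' t', (s, t) ∈ D ∧ (s', t') ∈ D ∧ (s, t) ≠ (s', t') ∧
    t' ≤ t ∧ t < s ∧ s ≤ s' ∧
    D' = D.erase (s, t)

/-- `Cstar` is an output of `Normalize` on `D`: merge steps are applied until none
applies, then drop steps are applied until none applies. -/
def NormalizeOutput (D Cstar : Finset (ℕ × ℕ)) : Prop :=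
  ∃ D1, Relation.ReflTransGen MergeStep D D1 ∧ (∀ D', ¬ MergeStep D1 D') ∧
    Relation.ReflTransGen DropStep D1 Cstar ∧ (∀ D', ¬ DropStep Cstar D')

/-- `L(D)`: nodes `v` with `T¹_v(D) ≠ ∅` and `T²_v(D) = T³_v(D) = ∅`. -/
def Lset (D : Finset (ℕ × ℕ)) : Set ℕ :=
  {v | (∃ r ∈ D, r.2 = v ∧ v < r.1) ∧ (¬∃ r ∈ D, r.2 < v ∧ v < r.1) ∧
    ¬∃ r ∈ D, r.2 < v ∧ v = r.1}

/-- `R(D)`: nodes `v` with `T¹_v(D) = T²_v(D) = ∅` and `T³_v(D) ≠ ∅`. -/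
def Rset (D : Finset (ℕ × ℕ)) : Set ℕ :=
  {v | (¬∃ r ∈ D, r.2 = v ∧ v < r.1) ∧ (¬∃ r ∈ D, r.2 < v ∧ v < r.1) ∧
    ∃ r ∈ D, r.2 < v ∧ v = r.1}


/-!
`L(D)` and `R(D)` only depend on the two sets `⋃ [t, s)` and `⋃ (t, s]` covered by the requests
of `D`: `L(D)` is the first minus the second and `R(D)` the second minus the first. A merge step
replaces two overlapping intervals by their union and a drop step removes an interval contained
in another, so neither changes these covers. In a normal form no `t` lies in some `(t', s']` and
no `s` in some `[t', s')`, since otherwise a merge or a drop step would still apply.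
-/

section Cover

variable {α β : Type*} [DecidableEq α]

theorem _root_.Finset.set_biUnion_erase_of_subset {f : α → Set β} {D : Finset α} {a b : α}
    (hb : b ∈ D.erase a) (hab : f a ⊆ f b) :
    ⋃ r ∈ D.erase a, f r = ⋃ r ∈ D, f r := by
  refine le_antisymm (Set.biUnion_subset_biUnion_left (Finset.erase_subset a D)) ?_
  refine Set.iUnion₂_subset fun r hr => ?_
  by_cases hra : r = a
  · subst hra
    exact hab.trans (Set.subset_biUnion_of_mem (u := f) hb)
  · exact Set.subset_biUnion_of_mem (u := f) (Finset.mem_erase.mpr ⟨hra, hr⟩)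

theorem _root_.Finset.set_biUnion_insert_erase_erase {f : α → Set β} {D : Finset α}
    {a b c : α} (ha : a ∈ D) (hb : b ∈ D.erase a) (habc : f a ∪ f b = f c) :
    ⋃ r ∈ insert c ((D.erase a).erase b), f r = ⋃ r ∈ D, f r := by
  rw [Finset.set_biUnion_insert, ← habc, Set.union_assoc]
  conv_rhs => rw [← Finset.insert_erase ha, Finset.set_biUnion_insert, ← Finset.insert_erase hb,
    Finset.set_biUnion_insert]

end Cover

theorem _root_.Relation.ReflTransGen.apply_eq_of_invariant {α β : Type*} {r : α → α → Prop}
    {f : α → β} (hf : ∀ a b, r a b → f b = f a) {a b : α}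
    (h : Relation.ReflTransGen r a b) : f b = f a := by
  induction h with
  | refl => rfl
  | tail _ hbc ih => exact (hf _ _ hbc).trans ih

def RightToLeft (D : Finset (ℕ × ℕ)) : Prop := ∀ r ∈ D, r.2 < r.1

def icoCover (D : Finset (ℕ × ℕ)) : Set ℕ := ⋃ r ∈ D, Set.Ico r.2 r.1

def iocCover (D : Finset (ℕ × ℕ)) : Set ℕ := ⋃ r ∈ D, Set.Ioc r.2 r.1

theorem mem_icoCover {D : Finset (ℕ × ℕ)} {v : ℕ} :
    v ∈ icoCover D ↔ ∃ r ∈ D, r.2 ≤ v ∧ v < r.1 := by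
  simp only [icoCover, Set.mem_iUnion, Set.mem_Ico, exists_prop]

theorem mem_iocCover {D : Finset (ℕ × ℕ)} {v : ℕ} :
    v ∈ iocCover D ↔ ∃ r ∈ D, r.2 < v ∧ v ≤ r.1 := by
  simp only [iocCover, Set.mem_iUnion, Set.mem_Ioc, exists_prop]

theorem Lset_eq_icoCover_diff (D : Finset (ℕ × ℕ)) : Lset D = icoCover D \ iocCover D := by
  ext v
  simp only [Lset, Set.mem_ofPred_eq, Set.mem_sdiff, mem_icoCover, mem_iocCover]
  constructor
  · rintro ⟨⟨r, hr, hv⟩, hT2, hT3⟩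
    refine ⟨⟨r, hr, hv.1.le, hv.2⟩, fun ⟨r', hr', hv'⟩ => ?_⟩
    rcases hv'.2.lt_or_eq with h | h
    exacts [hT2 ⟨r', hr', hv'.1, h⟩, hT3 ⟨r', hr', hv'.1, h⟩]
  · rintro ⟨⟨r, hr, hv⟩, hnot⟩
    have hrv : r.2 = v := by
      by_contra h
      exact hnot ⟨r, hr, lt_of_le_of_ne hv.1 h, hv.2.le⟩
    exact ⟨⟨r, hr, hrv, hv.2⟩, fun ⟨r', hr', hv'⟩ => hnot ⟨r', hr', hv'.1, hv'.2.le⟩,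
      fun ⟨r', hr', hv'⟩ => hnot ⟨r', hr', hv'.1, hv'.2.le⟩⟩

theorem Rset_eq_iocCover_diff (D : Finset (ℕ × ℕ)) : Rset D = iocCover D \ icoCover D := by
  ext v
  simp only [Rset, Set.mem_ofPred_eq, Set.mem_sdiff, mem_icoCover, mem_iocCover]
  constructor
  · rintro ⟨hT1, hT2, ⟨r, hr, hv⟩⟩
    refine ⟨⟨r, hr, hv.1, hv.2.le⟩, fun ⟨r', hr', hv'⟩ => ?_⟩
    rcases hv'.1.lt_or_eq with h | h
    exacts [hT2 ⟨r', hr', h, hv'.2⟩, hT1 ⟨r', hr', h, hv'.2⟩]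
  · rintro ⟨⟨r, hr, hv⟩, hnot⟩
    have hrv : v = r.1 := by
      by_contra h
      exact hnot ⟨r, hr, hv.1.le, lt_of_le_of_ne hv.2 h⟩
    exact ⟨fun ⟨r', hr', hv'⟩ => hnot ⟨r', hr', hv'.1.le, hv'.2⟩,
      fun ⟨r', hr', hv'⟩ => hnot ⟨r', hr', hv'.1.le, hv'.2⟩, ⟨r, hr, hv.1, hrv⟩⟩

theorem MergeStep.covers_eq {D D' : Finset (ℕ × ℕ)} (h : MergeStep D D') :
    (icoCover D', iocCover D') = (icoCover D, iocCover D) := by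
  obtain ⟨s, t, s', t', hst, hst', hne, -, -, ht't, hts', hs's, rfl⟩ := h
  have hmem : (s', t') ∈ D.erase (s, t) := Finset.mem_erase.mpr ⟨hne.symm, hst'⟩
  rw [icoCover, iocCover, icoCover, iocCover,
    Finset.set_biUnion_insert_erase_erase hst hmem (f := fun r => Set.Ico r.2 r.1),
    Finset.set_biUnion_insert_erase_erase hst hmem (f := fun r => Set.Ioc r.2 r.1)]
  · rw [Set.Ioc_union_Ioc' (ht't.trans (hts'.trans hs's)) hts', min_eq_right ht't,
      max_eq_left hs's]
  · rw [Set.Ico_union_Ico' (ht't.trans (hts'.trans hs's)) hts', min_eq_right ht't,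
      max_eq_left hs's]

theorem DropStep.covers_eq {D D' : Finset (ℕ × ℕ)} (h : DropStep D D') :
    (icoCover D', iocCover D') = (icoCover D, iocCover D) := by
  obtain ⟨s, t, s', t', -, hst', hne, ht't, -, hss', rfl⟩ := h
  have hmem : (s', t') ∈ D.erase (s, t) := Finset.mem_erase.mpr ⟨hne.symm, hst'⟩
  rw [icoCover, iocCover, icoCover, iocCover,
    Finset.set_biUnion_erase_of_subset hmem (f := fun r => Set.Ico r.2 r.1)
      (Set.Ico_subset_Ico ht't hss'),
    Finset.set_biUnion_erase_of_subset hmem (f := fun r => Set.Ioc r.2 r.1)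
      (Set.Ioc_subset_Ioc ht't hss')]

theorem MergeStep.rightToLeft {D D' : Finset (ℕ × ℕ)} (h : MergeStep D D')
    (hrl : RightToLeft D) : RightToLeft D' := by
  obtain ⟨s, t, s', t', -, -, -, hts, -, ht't, -, -, rfl⟩ := h
  intro r hr
  rcases Finset.mem_insert.mp hr with rfl | hr
  · exact ht't.trans_lt hts
  · exact hrl r (Finset.mem_of_mem_erase (Finset.mem_of_mem_erase hr))

theorem DropStep.subset {D D' : Finset (ℕ × ℕ)} (h : DropStep D D') : D' ⊆ D := by
  obtain ⟨s, t, -, -, -, -, -, -, -, -, rfl⟩ := h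
  exact Finset.erase_subset _ _

theorem MergeStep.rightToLeft_of_reflTransGen {D D' : Finset (ℕ × ℕ)}
    (h : Relation.ReflTransGen MergeStep D D') (hrl : RightToLeft D) : RightToLeft D' := by
  induction h with
  | refl => exact hrl
  | tail _ h ih => exact h.rightToLeft ih

theorem DropStep.subset_of_reflTransGen {D D' : Finset (ℕ × ℕ)}
    (h : Relation.ReflTransGen DropStep D D') : D' ⊆ D := by
  induction h with
  | refl => exact le_rfl
  | tail _ h ih => exact h.subset.trans ih

theorem MergeStep.exists_of_subset {C C' D : Finset (ℕ × ℕ)} (h : MergeStep C C')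
    (hCD : C ⊆ D) :
    ∃ D', MergeStep D D' := by
  obtain ⟨s, t, s', t', hst, hst', hne, h1, h2, h3, h4, h5, -⟩ := h
  exact ⟨_, s, t, s', t', hCD hst, hCD hst', hne, h1, h2, h3, h4, h5, rfl⟩

theorem snd_notMem_iocCover {C : Finset (ℕ × ℕ)} (hrl : RightToLeft C)
    (hmerge : ∀ D', ¬ MergeStep C D') (hdrop : ∀ D', ¬ DropStep C D')
    {r : ℕ × ℕ} (hr : r ∈ C) :
    r.2 ∉ iocCover C := by
  obtain ⟨s, t⟩ := r
  rw [mem_iocCover]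
  rintro ⟨⟨s', t'⟩, hr', ht't, hts'⟩
  have hne : (s, t) ≠ (s', t') := fun h => by simp_all
  rcases le_or_gt s' s with hs's | hss'
  · exact hmerge _ ⟨s, t, s', t', hr, hr', hne, hrl _ hr, hrl _ hr', ht't.le, hts', hs's, rfl⟩
  · exact hdrop _ ⟨s, t, s', t', hr, hr', hne, ht't.le, hrl _ hr, hss'.le, rfl⟩

theorem fst_notMem_icoCover {C : Finset (ℕ × ℕ)} (hrl : RightToLeft C)
    (hmerge : ∀ D', ¬ MergeStep C D') (hdrop : ∀ D', ¬ DropStep C D')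
    {r : ℕ × ℕ} (hr : r ∈ C) :
    r.1 ∉ icoCover C := by
  obtain ⟨s, t⟩ := r
  rw [mem_icoCover]
  rintro ⟨⟨s', t'⟩, hr', ht's, hss'⟩
  have hne : (s', t') ≠ (s, t) := fun h => by simp_all
  rcases le_or_gt t' t with ht't | htt'
  · exact hdrop _ ⟨s, t, s', t', hr, hr', hne.symm, ht't, hrl _ hr, hss'.le, rfl⟩
  · exact hmerge _
      ⟨s', t', s, t, hr', hr, hne, hrl _ hr', hrl _ hr, htt'.le, ht's, hss'.le, rfl⟩

theorem Lset_eq_of_normal {C : Finset (ℕ × ℕ)} (hrl : RightToLeft C)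
    (hmerge : ∀ D', ¬ MergeStep C D') (hdrop : ∀ D', ¬ DropStep C D') :
    Lset C = {v | ∃ r ∈ C, r.2 = v} := by
  ext v
  refine ⟨fun ⟨⟨r, hr, hv, _⟩, _⟩ => ⟨r, hr, hv⟩, ?_⟩
  rintro ⟨r, hr, rfl⟩
  rw [Lset_eq_icoCover_diff]
  exact ⟨mem_icoCover.mpr ⟨r, hr, le_rfl, hrl r hr⟩,
    snd_notMem_iocCover hrl hmerge hdrop hr⟩

theorem Rset_eq_of_normal {C : Finset (ℕ × ℕ)} (hrl : RightToLeft C)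
    (hmerge : ∀ D', ¬ MergeStep C D') (hdrop : ∀ D', ¬ DropStep C D') :
    Rset C = {v | ∃ r ∈ C, r.1 = v} := by
  ext v
  refine ⟨fun ⟨_, _, r, hr, _, hv⟩ => ⟨r, hr, hv.symm⟩, ?_⟩
  rintro ⟨r, hr, rfl⟩
  rw [Rset_eq_iocCover_diff]
  exact ⟨mem_iocCover.mpr ⟨r, hr, hrl r hr, le_rfl⟩,
    fst_notMem_icoCover hrl hmerge hdrop hr⟩

/-- if `Cstar` is the output of `Normalize` on `Ĉ` (all requests
right-to-left), then `L(Ĉ)` is exactly the set of terminating nodes of `Cstar`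
and `R(Ĉ)` exactly the set of its starting nodes. -/
theorem Lset_Rset_of_normalize (Chat Cstar : Finset (ℕ × ℕ))
    (hrl : ∀ r ∈ Chat, r.2 < r.1)
    (hout : NormalizeOutput Chat Cstar) :
    Lset Chat = {v | ∃ r ∈ Cstar, r.2 = v} ∧
    Rset Chat = {v | ∃ r ∈ Cstar, r.1 = v} := by
  obtain ⟨D, hmerges, hmergeD, hdrops, hdrop⟩ := hout
  have hsub : Cstar ⊆ D := DropStep.subset_of_reflTransGen hdrops
  have hrlC : RightToLeft Cstar := fun r hr =>
    MergeStep.rightToLeft_of_reflTransGen hmerges hrl r (hsub hr)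
  have hmerge : ∀ D', ¬ MergeStep Cstar D' := fun _ h => (h.exists_of_subset hsub).elim hmergeD
  have hcovers : (icoCover Cstar, iocCover Cstar) = (icoCover Chat, iocCover Chat) :=
    (hdrops.apply_eq_of_invariant fun _ _ h => h.covers_eq).trans
      (hmerges.apply_eq_of_invariant fun _ _ h => h.covers_eq)
  obtain ⟨hico, hioc⟩ := Prod.mk.inj hcovers
  rw [Lset_eq_icoCover_diff, Rset_eq_iocCover_diff, ← hico, ← hioc, ← Lset_eq_icoCover_diff,
    ← Rset_eq_iocCover_diff]
  exact ⟨Lset_eq_of_normal hrlC hmerge hdrop, Rset_eq_of_normal hrlC hmerge hdrop⟩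

end RideSharing
end

section
/- For a cycle scenario R, there exists an optimal ride π with cw(π) ≤ 3n and with both cw(π) mod n and acw(π) mod n belonging to V_C ∪ {s₀,t₀}. -/
namespace RideSharing

/-- The cycle graph on `{1,…,n}`. -/
def cycAdj (n : ℕ) (a b : ℕ) : Prop :=
  (b = a + 1 ∨ a = b + 1 ∨ (a = n ∧ b = 1) ∨ (a = 1 ∧ b = n)) ∧
    1 ≤ a ∧ a ≤ n ∧ 1 ≤ b ∧ b ≤ n

/-- Auxiliary computation of the winding numbers `ℓ_π`. -/
def ellAux (n : ℕ) : ℕ → ℤ → List ℕ → List ℤ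
  | _, _, [] => []
  | prev, cur, x :: xs =>
    let c : ℤ := if prev = n ∧ x = 1 then cur + 1
      else if prev = 1 ∧ x = n then cur - 1 else cur
    c :: ellAux n x c xs

/-- The list of winding numbers `ℓ_π(1),…,ℓ_π(len π)` (with `ℓ_π(1) = 0`). -/
def ellList (n : ℕ) : List ℕ → List ℤ
  | [] => []
  | x :: xs => 0 :: ellAux n x 0 xs

/-- The unrolled ride `τ_π(i) = π_i + (ℓ_π(i) − min_j ℓ_π(j))·n`. -/
def tauList (n : ℕ) (π : List ℕ) : List ℤ :=
  ((π.zip (ellList n π)).map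
    (fun p => (p.1 : ℤ) + (p.2 - (ellList n π).foldr min 0) * n))

/-- `cw(π)`: maximum of `τ_π`. -/
def cw (n : ℕ) (π : List ℕ) : ℤ :=
  (tauList n π).foldr max ((tauList n π).headD 0)

/-- `acw(π)`: minimum of `τ_π`. -/
def acw (n : ℕ) (π : List ℕ) : ℤ :=
  (tauList n π).foldr min ((tauList n π).headD 0)

/-- First time step at which `τ_π` attains `acw(π)`. -/
def acwIdx (n : ℕ) (π : List ℕ) : ℕ := (tauList n π).idxOf (acw n π)

/-- First time step at which `τ_π` attains `cw(π)`. -/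
def cwIdx (n : ℕ) (π : List ℕ) : ℕ := (tauList n π).idxOf (cw n π)

/-- `mod n` with representatives in `{1,…,n}`, for natural numbers. -/
def mod1 (n v : ℕ) : ℕ := (v - 1) % n + 1

/-- `mod n` with representatives in `{1,…,n}`, for integers. -/
def mod1Z (n : ℕ) (x : ℤ) : ℕ := ((x - 1) % (n : ℤ)).toNat + 1

/-- The weight function of the unrolled path `G°` on `{1,…,3n}`. -/
def wPath (n : ℕ) (w : ℕ → ℕ → ℚ) (a b : ℕ) : ℚ := w (mod1 n a) (mod1 n b)

/-- `V°_{α,β}`: nodes of `{α,…,β}` whose residue mod `n` is uniquely represented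
in `{α,…,β}`. -/
def Vab (n  α β : ℕ) : Finset ℕ :=
  (Finset.Icc α β).filter (fun v =>
    ∀ v' ∈ Finset.Icc α β, mod1 n v' = mod1 n v → v' = v)

/-- `C°_{α,β}`: the requests of `C` lifted to uniquely represented nodes of
`{α,…,β}`. -/
def Cab (n : ℕ) (C : Finset (ℕ × ℕ)) (α β : ℕ) : Finset (ℕ × ℕ) :=
  ((Finset.Icc α β) ×ˢ (Finset.Icc α β)).filter (fun p =>
    (mod1 n p.1, mod1 n p.2) ∈ C ∧ p.1 ∈ Vab n α β ∧ p.2 ∈ Vab n α β)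

/-!
Lift a ride `π` on the cycle to the walk `τ = τ_π` on `ℤ`: it moves by `±1` and `τ ≡ π` mod `n`.
At an extremum of `τ` the ride is at `s₀ = 1` or `t₀`, or it is strictly inside the ride, which
then makes a detour `x p x`; unless `p` is a request endpoint, cutting out `p x` gives a cheaper
feasible ride. So every optimal ride satisfies the residue conditions.

If an optimal ride has `cw > 3n`, then `τ` spans at least `2n` levels, since `acw ≤ n`.
Every level between `acw` and `cw` is crossed at least once, and every level outside the interval
between the two endpoints of `τ` at least twice. Hence the ride costs at least
`2W + min D (W - D)`, where `W` is the total weight of the cycle and `D` the weight of the arc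
from `1` to `t₀`. The two rides that go twice around the cycle and then on to `t₀`, either
clockwise or anticlockwise, cost `2W + D` and `3W - D`, and both have `cw ≤ 3n`.
-/

section Extrema

variable {α : Type*} [LinearOrder α]

lemma le_foldr_max {l : List α} {b x : α} (hx : x ∈ l) : x ≤ l.foldr max b := by
  induction l with
  | nil => simp at hx
  | cons a l ih =>
    rcases List.mem_cons.1 hx with rfl | hx
    · exact le_max_left _ _
    · exact (ih hx).trans (le_max_right _ _)

lemma foldr_max_eq_or_mem (l : List α) (b : α) : l.foldr max b = b ∨ l.foldr max b ∈ l := by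
  induction l with
  | nil => simp
  | cons a l ih =>
    rcases max_choice a (l.foldr max b) with h | h <;> simp only [List.foldr_cons, h]
    · simp
    · exact ih.imp id (List.mem_cons_of_mem _)

lemma foldr_max_headD_mem {l : List α} (hl : l ≠ []) (d : α) : l.foldr max (l.headD d) ∈ l := by
  obtain ⟨a, l, rfl⟩ := List.exists_cons_of_ne_nil hl
  exact (foldr_max_eq_or_mem _ _).elim (fun h => h ▸ List.mem_cons_self) id

lemma foldr_min_le {l : List α} {b x : α} (hx : x ∈ l) : l.foldr min b ≤ x :=
  le_foldr_max (α := αᵒᵈ) hx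

lemma foldr_min_eq_or_mem (l : List α) (b : α) : l.foldr min b = b ∨ l.foldr min b ∈ l :=
  foldr_max_eq_or_mem (α := αᵒᵈ) l b

lemma foldr_min_headD_mem {l : List α} (hl : l ≠ []) (d : α) : l.foldr min (l.headD d) ∈ l :=
  foldr_max_headD_mem (α := αᵒᵈ) hl d

end Extrema

section IntervalSums

open Finset

lemma sum_nsmul_le_sum_comp_of_le_card_fiber {ι κ M : Type*} [DecidableEq κ] [AddCommMonoid M]
    [PartialOrder M] [IsOrderedAddMonoid M] {s : Finset ι} {t : Finset κ} {e : ι → κ}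
    (he : ∀ i ∈ s, e i ∈ t) {f : κ → M} (hf : ∀ k, 0 ≤ f k) {c : κ → ℕ}
    (hc : ∀ k ∈ t, c k ≤ #{i ∈ s | e i = k}) :
    ∑ k ∈ t, c k • f k ≤ ∑ i ∈ s, f (e i) := by
  rw [← sum_fiberwise_of_maps_to' he]
  refine sum_le_sum fun k hk => ?_
  rw [sum_const]
  exact nsmul_le_nsmul_left (hf k) (hc k hk)

variable {M : Type*} [AddCommMonoid M]

lemma sum_Ico_consecutive_int (f : ℤ → M) {a b c : ℤ} (hab : a ≤ b) (hbc : b ≤ c) :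
    ∑ k ∈ Ico a b, f k + ∑ k ∈ Ico b c, f k = ∑ k ∈ Ico a c, f k := by
  rw [← sum_union (Ico_disjoint_Ico_consecutive a b c), Ico_union_Ico_eq_Ico hab hbc]

lemma sum_range_add_eq_sum_Ico (f : ℤ → M) (x : ℤ) (N : ℕ) :
    ∑ i ∈ range N, f (x + i) = ∑ k ∈ Ico x (x + N), f k := by
  rw [Int.Ico_eq_finset_map, sum_map]
  simp

lemma sum_range_sub_eq_sum_Ico (f : ℤ → M) (x : ℤ) (N : ℕ) :
    ∑ i ∈ range N, f (x - i) = ∑ k ∈ Ico (x + 1 - N) (x + 1), f k := by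
  have h := sum_range_add_eq_sum_Ico f (x + 1 - N) N
  rw [sub_add_cancel] at h
  rw [← h, ← sum_range_reflect]
  refine sum_congr rfl fun j hj => ?_
  rw [mem_range] at hj
  congr 1
  omega

end IntervalSums

section PeriodicSums

open Finset

variable {f : ℤ → ℚ} {c : ℤ}

lemma sum_Ico_add_of_periodic (hf : Function.Periodic f c) (x y : ℤ) :
    ∑ k ∈ Ico (x + c) (y + c), f k = ∑ k ∈ Ico x y, f k := by
  rw [← sum_Ico_add']
  exact sum_congr rfl fun k _ => hf k

lemma sum_Ico_period_eq (hf : Function.Periodic f c) (hc : 0 ≤ c) (x y : ℤ) :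
    ∑ k ∈ Ico x (x + c), f k = ∑ k ∈ Ico y (y + c), f k := by
  have hsingle : ∀ z : ℤ, Ico z (z + 1) = {z} := fun z => by
    ext
    simp only [mem_Ico, mem_singleton]
    omega
  have hstep : ∀ z, ∑ k ∈ Ico (z + 1) (z + 1 + c), f k = ∑ k ∈ Ico z (z + c), f k := by
    intro z
    have h1 := sum_Ico_consecutive_int f (show z ≤ z + 1 by omega)
      (show z + 1 ≤ z + 1 + c by omega)
    have h2 := sum_Ico_consecutive_int f (show z ≤ z + c by omega)
      (show z + c ≤ z + 1 + c by omega)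
    rw [show z + 1 + c = z + c + 1 by ring, hsingle, sum_singleton] at h1 h2
    rw [hf] at h2
    rw [show z + 1 + c = z + c + 1 by ring]
    linarith
  have key : ∀ z, ∑ k ∈ Ico z (z + c), f k = ∑ k ∈ Ico 0 (0 + c), f k := by
    intro z
    induction z using Int.induction_on with
    | zero => rfl
    | succ i ih => rw [hstep, ih]
    | pred i ih => rw [← ih, ← hstep, sub_add_cancel]
  rw [key x, key y]

lemma sum_Ico_add_mul_period (hf : Function.Periodic f c) (hc : 0 ≤ c) (x : ℤ) (l : ℕ) :
    ∑ k ∈ Ico x (x + l * c), f k = l * ∑ k ∈ Ico x (x + c), f k := by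
  induction l with
  | zero => simp
  | succ l ih =>
    have hl : (0 : ℤ) ≤ l * c := mul_nonneg (Nat.cast_nonneg l) hc
    rw [← sum_Ico_consecutive_int f (show x ≤ x + l * c by omega)
      (show x + l * c ≤ x + (l + 1 : ℕ) * c by push_cast; nlinarith), ih,
      show x + ((l + 1 : ℕ) : ℤ) * c = x + l * c + c by push_cast; ring,
      sum_Ico_period_eq hf hc (x + l * c) x]
    push_cast
    ring

lemma sum_Ico_le_add_sum_Ico (hf0 : ∀ k, 0 ≤ f k) {x y x' y' : ℤ} (h : x' ≤ y) :
    ∑ k ∈ Ico x y', f k ≤ ∑ k ∈ Ico x y, f k + ∑ k ∈ Ico x' y', f k := by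
  calc ∑ k ∈ Ico x y', f k ≤ ∑ k ∈ Ico x y ∪ Ico x' y', f k :=
        sum_le_sum_of_subset_of_nonneg
          (fun k hk => by simp only [mem_union, mem_Ico] at hk ⊢; omega) fun k _ _ => hf0 k
    _ ≤ _ := by
        rw [← sum_union_inter]
        exact le_add_of_nonneg_right (sum_nonneg fun k _ => hf0 k)

/-- Two periods starting at `u` are covered by `[u, v)`, `[v, M)` and `[m, u)` shifted by `2c`. -/
lemma sum_Ico_two_periods_le (hf : Function.Periodic f c) (hf0 : ∀ k, 0 ≤ f k) {m u v M : ℤ}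
    (hmM : m + 2 * c ≤ M) :
    ∑ k ∈ Ico u (u + 2 * c), f k ≤
      ∑ k ∈ Ico u v, f k + ∑ k ∈ Ico v M, f k + ∑ k ∈ Ico m u, f k := by
  have h1 := sum_Ico_le_add_sum_Ico hf0 (x := u) (y := v) (y' := u + 2 * c) le_rfl
  have h2 := sum_Ico_le_add_sum_Ico hf0 (x := v) (y' := u + 2 * c) hmM
  have h3 := sum_Ico_add_of_periodic (by simpa using hf.nat_mul 2) m u
  linarith

lemma exists_sum_Ico_eq_add_mul (hf : Function.Periodic f c) (hc : 0 < c)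
    {x y x₀ y₀ : ℤ} (hx : x ≡ x₀ [ZMOD c]) (hy : y ≡ y₀ [ZMOD c]) (h₀ : x₀ ≤ y₀)
    (hlt : y₀ - x₀ < y - x + c) :
    ∃ l : ℕ, ∑ k ∈ Ico x y, f k = ∑ k ∈ Ico x₀ y₀, f k + l * ∑ k ∈ Ico x₀ (x₀ + c), f k := by
  obtain ⟨q, hq⟩ := (hy.sub hx).symm.dvd
  have hq0 : 0 ≤ q := by
    by_contra hneg
    nlinarith
  lift q to ℕ using hq0
  have hcq : 0 ≤ c * q := by positivity
  obtain ⟨r, hr⟩ := hx.symm.dvd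
  refine ⟨q, ?_⟩
  rw [← sum_Ico_consecutive_int f (show x ≤ x + (y₀ - x₀) by omega)
    (show x + (y₀ - x₀) ≤ y by linarith), show y = x + (y₀ - x₀) + q * c by linarith,
    sum_Ico_add_mul_period hf hc.le, sum_Ico_period_eq hf hc.le _ x₀]
  congr 1
  rw [← sum_Ico_add_of_periodic (hf.int_mul r) x₀ y₀]
  congr 2 <;> linear_combination hr

end PeriodicSums

lemma two_mul_add_min_le {W D X B : ℚ} (hD : 0 ≤ D) (hDW : D ≤ W) {l : ℕ} (hX : X = D + l * W)
    (hB : max X (4 * W - X) ≤ B) : 2 * W + min D (W - D) ≤ B := by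
  have h1 := (le_max_left _ _).trans hB
  have h2 := (le_max_right _ _).trans hB
  have hmin := min_le_right D (W - D)
  rcases l with _ | _ | l
  · rw [Nat.cast_zero, zero_mul, add_zero] at hX
    linarith
  · rw [Nat.cast_one, one_mul] at hX
    linarith
  · have : 0 ≤ (l : ℚ) * W := mul_nonneg (Nat.cast_nonneg l) (by linarith)
    have := min_le_left D (W - D)
    push_cast at hX
    linarith

def IsUnitWalk (g : ℕ → ℤ) (L : ℕ) : Prop :=
  ∀ i, i + 1 < L → g (i + 1) = g i + 1 ∨ g (i + 1) = g i - 1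

namespace IsUnitWalk

open Finset

variable {g h : ℕ → ℤ} {L : ℕ}

lemma exists_min_eq (hg : IsUnitWalk g L) {p q : ℕ} (hpq : p ≤ q) (hq : q < L) {k : ℤ}
    (hk : min (g p) (g q) ≤ k) (hk' : k < max (g p) (g q)) :
    ∃ i, p ≤ i ∧ i < q ∧ min (g i) (g (i + 1)) = k := by
  induction q, hpq using Nat.le_induction with
  | base => omega
  | succ q hpq ih =>
    by_cases hprev : min (g p) (g q) ≤ k ∧ k < max (g p) (g q)
    · obtain ⟨i, hpi, hiq, hi⟩ := ih (by omega) hprev.1 hprev.2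
      exact ⟨i, hpi, by omega, hi⟩
    · refine ⟨q, hpq, by omega, ?_⟩
      rcases hg q hq with hs | hs <;> omega

lemma pred_eq_succ_of_extr (hg : IsUnitWalk g L) {i : ℕ} (h0 : 0 < i) (hi : i + 1 < L)
    (hext : (∀ j < L, g j ≤ g i) ∨ (∀ j < L, g i ≤ g j)) : g (i - 1) = g (i + 1) := by
  have hpred := hg (i - 1) (by omega)
  rw [Nat.sub_add_cancel h0] at hpred
  have hsucc := hg i hi
  rcases hext with h | h <;>
  · have := h (i - 1) (by omega)
    have := h (i + 1) hi
    omega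

lemma sub_eq_of_modEq {n : ℕ} (hn : 3 ≤ n) (hg : IsUnitWalk g L) (hh : IsUnitWalk h L)
    (hmod : ∀ i < L, g i ≡ h i [ZMOD n]) : ∀ i < L, g i - h i = g 0 - h 0 := by
  intro i
  induction i with
  | zero => intro _; rfl
  | succ i ih =>
    intro hi
    have hdvd : (n : ℤ) ∣ (g (i + 1) - h (i + 1)) - (g i - h i) := by
      convert ((hmod (i + 1) hi).sub (hmod i (by omega))).symm.dvd using 1
      ring
    have hsmall : |(g (i + 1) - h (i + 1)) - (g i - h i)| < n := by
      rw [abs_lt]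
      rcases hg i hi with hg' | hg' <;> rcases hh i hi with hh' | hh' <;> constructor <;> omega
    have := Int.eq_zero_of_abs_lt_dvd hdvd hsmall
    have := ih (by omega)
    omega

-- Step `i` of the walk crosses level `min (g i) (g (i + 1))`.
lemma le_card_crossings (hg : IsUnitWalk g L) (hL : 0 < L) {im iM : ℕ} (him : im < L)
    (hiM : iM < L) (hmin : ∀ i < L, g im ≤ g i) (hmax : ∀ i < L, g i ≤ g iM)
    {k : ℤ} (hk : g im ≤ k) (hk' : k < g iM) :
    (if k < min (g 0) (g (L - 1)) ∨ max (g 0) (g (L - 1)) ≤ k then 2 else 1) ≤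
      #{i ∈ range (L - 1) | min (g i) (g (i + 1)) = k} := by
  set S := {i ∈ range (L - 1) | min (g i) (g (i + 1)) = k}
  have hcross : ∀ p q, p ≤ q → q < L → min (g p) (g q) ≤ k → k < max (g p) (g q) →
      ∃ i ∈ S, p ≤ i ∧ i < q := by
    intro p q hpq hq h h'
    obtain ⟨i, hpi, hiq, hi⟩ := hg.exists_min_eq hpq hq h h'
    exact ⟨i, mem_filter.2 ⟨mem_range.2 (by omega), hi⟩, hpi, hiq⟩
  have htwo : ∀ j < L, min (g 0) (g j) ≤ k → k < max (g 0) (g j) →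
      min (g j) (g (L - 1)) ≤ k → k < max (g j) (g (L - 1)) → 2 ≤ #S := by
    intro j hj h1 h1' h2 h2'
    obtain ⟨i₁, hi₁, -, hi₁j⟩ := hcross 0 j (Nat.zero_le _) hj h1 h1'
    obtain ⟨i₂, hi₂, hji₂, -⟩ := hcross j (L - 1) (by omega) (by omega) h2 h2'
    exact one_lt_card.2 ⟨i₁, hi₁, i₂, hi₂, by omega⟩
  have h0 := hmin 0 hL; have h0' := hmax 0 hL
  have hl := hmin (L - 1) (by omega); have hl' := hmax (L - 1) (by omega)
  split_ifs with hout
  · rcases hout with hlow | hhigh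
    · exact htwo im him (by omega) (by omega) (by omega) (by omega)
    · exact htwo iM hiM (by omega) (by omega) (by omega) (by omega)
  · rcases le_total im iM with h | h
    · obtain ⟨i, hi, -⟩ := hcross im iM h hiM (by omega) (by omega)
      exact card_pos.2 ⟨i, hi⟩
    · obtain ⟨i, hi, -⟩ := hcross iM im h him (by omega) (by omega)
      exact card_pos.2 ⟨i, hi⟩

lemma sum_Ico_le_sum_min (hg : IsUnitWalk g L) (hL : 0 < L) {im iM : ℕ} (him : im < L)
    (hiM : iM < L) (hmin : ∀ i < L, g im ≤ g i) (hmax : ∀ i < L, g i ≤ g iM)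
    {f : ℤ → ℚ} (hf : ∀ k, 0 ≤ f k) :
    2 * ∑ k ∈ Ico (g im) (min (g 0) (g (L - 1))), f k +
        ∑ k ∈ Ico (min (g 0) (g (L - 1))) (max (g 0) (g (L - 1))), f k +
        2 * ∑ k ∈ Ico (max (g 0) (g (L - 1))) (g iM), f k ≤
      ∑ i ∈ range (L - 1), f (min (g i) (g (i + 1))) := by
  set u := min (g 0) (g (L - 1))
  set v := max (g 0) (g (L - 1))
  set c : ℤ → ℕ := fun k => if k < u ∨ v ≤ k then 2 else 1
  have hmu : g im ≤ u := le_min (hmin 0 hL) (hmin _ (by omega))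
  have hvM : v ≤ g iM := max_le (hmax 0 hL) (hmax _ (by omega))
  have huv : u ≤ v := min_le_max
  have hmaps : ∀ i ∈ range (L - 1), min (g i) (g (i + 1)) ∈ Ico (g im) (g iM) := by
    intro i hi
    have hi : i + 1 < L := by rw [mem_range] at hi; omega
    have := hmin i (by omega); have := hmin (i + 1) hi
    have := hmax i (by omega); have := hmax (i + 1) hi
    rw [mem_Ico]
    rcases hg i hi with hs | hs <;> omega
  have hpart : ∀ a b (n : ℕ), (∀ k ∈ Ico a b, c k = n) →
      ∑ k ∈ Ico a b, c k • f k = n * ∑ k ∈ Ico a b, f k := by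
    intro a b n h
    rw [mul_sum]
    exact sum_congr rfl fun k hk => by rw [h k hk, nsmul_eq_mul]
  calc _ = ∑ k ∈ Ico (g im) (g iM), c k • f k := by
        rw [← sum_Ico_consecutive_int _ hmu (huv.trans hvM), ← sum_Ico_consecutive_int _ huv hvM,
          hpart _ _ 2, hpart u v 1, hpart v _ 2]
        · push_cast; ring
        all_goals intro k hk; rw [mem_Ico] at hk; simp only [c]; split_ifs <;> omega
    _ ≤ _ := sum_nsmul_le_sum_comp_of_le_card_fiber hmaps hf fun k hk => by
        rw [mem_Ico] at hk
        exact hg.le_card_crossings hL him hiM hmin hmax hk.1 hk.2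

lemma max_sum_Ico_le_sum_min_of_periodic (hg : IsUnitWalk g L) (hL : 0 < L) {im iM : ℕ}
    (him : im < L) (hiM : iM < L) (hmin : ∀ i < L, g im ≤ g i) (hmax : ∀ i < L, g i ≤ g iM)
    {f : ℤ → ℚ} {c : ℤ} (hf : Function.Periodic f c) (hf0 : ∀ k, 0 ≤ f k)
    (hspan : g im + 2 * c ≤ g iM) :
    max (∑ k ∈ Ico (min (g 0) (g (L - 1))) (max (g 0) (g (L - 1))), f k)
        (2 * ∑ k ∈ Ico (min (g 0) (g (L - 1))) (min (g 0) (g (L - 1)) + 2 * c), f k -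
          ∑ k ∈ Ico (min (g 0) (g (L - 1))) (max (g 0) (g (L - 1))), f k) ≤
      ∑ i ∈ range (L - 1), f (min (g i) (g (i + 1))) := by
  have hlevels := hg.sum_Ico_le_sum_min hL him hiM hmin hmax hf0
  have hperiods := sum_Ico_two_periods_le hf hf0 (u := min (g 0) (g (L - 1)))
    (v := max (g 0) (g (L - 1))) hspan
  have h1 := sum_nonneg fun k (_ : k ∈ Ico (g im) (min (g 0) (g (L - 1)))) => hf0 k
  have h2 := sum_nonneg fun k (_ : k ∈ Ico (max (g 0) (g (L - 1))) (g iM)) => hf0 k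
  exact max_le (by linarith) (by linarith)

end IsUnitWalk

section Residues

variable {n : ℕ}

lemma mod1Z_eq_mod1Z_iff (hn : 0 < n) {x y : ℤ} : mod1Z n x = mod1Z n y ↔ x ≡ y [ZMOD n] := by
  have h0 : ∀ z : ℤ, 0 ≤ (z - 1) % (n : ℤ) := fun z => Int.emod_nonneg _ (by omega)
  have key : mod1Z n x = mod1Z n y ↔ x - 1 ≡ y - 1 [ZMOD n] := by
    unfold mod1Z Int.ModEq
    have := h0 x
    have := h0 y
    omega
  rw [key]
  exact ⟨fun h => by simpa using h.add_right 1, fun h => h.sub_right 1⟩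

lemma mod1Z_modEq (hn : 0 < n) (x : ℤ) : (mod1Z n x : ℤ) ≡ x [ZMOD n] := by
  have h0 : 0 ≤ (x - 1) % (n : ℤ) := Int.emod_nonneg _ (by omega)
  have h1 : (mod1Z n x : ℤ) = (x - 1) % n + 1 := by unfold mod1Z; omega
  rw [h1]
  simpa using (Int.mod_modEq (x - 1) n).add_right 1

lemma mod1Z_natCast {v : ℕ} (h1 : 1 ≤ v) (hv : v ≤ n) : mod1Z n v = v := by
  unfold mod1Z
  rw [Int.emod_eq_of_lt (by omega) (by omega)]
  omega

lemma one_le_mod1Z (x : ℤ) : 1 ≤ mod1Z n x := by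
  unfold mod1Z
  omega

lemma mod1Z_le (hn : 0 < n) (x : ℤ) : mod1Z n x ≤ n := by
  have := Int.emod_lt_of_pos (x - 1) (by omega : (0 : ℤ) < n)
  unfold mod1Z
  omega

lemma mod1Z_add_mul (x c : ℤ) : mod1Z n (x + c * n) = mod1Z n x := by
  unfold mod1Z
  rw [show x + c * n - 1 = x - 1 + c * n by ring, Int.add_mul_emod_self_right]

lemma cycAdj_mod1Z_add_one (hn : 0 < n) (x : ℤ) : cycAdj n (mod1Z n x) (mod1Z n (x + 1)) := by
  set a := mod1Z n x
  have ha1 : 1 ≤ a := one_le_mod1Z x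
  have han : a ≤ n := mod1Z_le hn x
  have hshift : mod1Z n (x + 1) = mod1Z n ((a + 1 : ℕ) : ℤ) :=
    (mod1Z_eq_mod1Z_iff hn).2 (by push_cast; exact ((mod1Z_modEq hn x).add_right 1).symm)
  rcases han.lt_or_eq with han | han
  · rw [hshift, mod1Z_natCast (by omega) han]
    exact ⟨Or.inl rfl, ha1, han.le, by omega, han⟩
  · have h1 : mod1Z n ((a + 1 : ℕ) : ℤ) = 1 := by
      rw [show ((a + 1 : ℕ) : ℤ) = ((1 : ℕ) : ℤ) + 1 * n by omega, mod1Z_add_mul,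
        mod1Z_natCast le_rfl hn]
    rw [hshift, h1]
    exact ⟨Or.inr (Or.inr (Or.inl ⟨han, rfl⟩)), ha1, han.le, le_rfl, hn⟩

end Residues

section Cost

lemma cost_eq_sum (w : ℕ → ℕ → ℚ) (l : List ℕ) :
    cost w l = ∑ i ∈ Finset.range (l.length - 1), w (l.getD i 0) (l.getD (i + 1) 0) := by
  induction l with
  | nil => simp [cost]
  | cons a l ih =>
    cases l with
    | nil => simp [cost]
    | cons b t =>
      rw [cost, ih, show (a :: b :: t).length - 1 = (b :: t).length - 1 + 1 by simp,
        Finset.sum_range_succ']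
      simp only [List.getD_cons_succ, List.getD_cons_zero]
      ring

lemma cost_append_cons (w : ℕ → ℕ → ℚ) (A : List ℕ) (x : ℕ) (l : List ℕ) :
    cost w (A ++ x :: l) = cost w (A ++ [x]) + cost w (x :: l) := by
  induction A with
  | nil => simp [cost]
  | cons a A ih =>
    cases A with
    | nil => simp [cost]
    | cons b A =>
      simp only [List.cons_append, cost] at ih ⊢
      rw [ih]
      ring

lemma cost_detour (w : ℕ → ℕ → ℚ) (A B : List ℕ) (x p : ℕ) :
    cost w (A ++ x :: p :: x :: B) = cost w (A ++ x :: B) + w x p + w p x := by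
  rw [cost_append_cons, cost_append_cons w A x B, cost, cost]
  ring

end Cost

section Winding

def ellStep (n p x : ℕ) (c : ℤ) : ℤ :=
  if p = n ∧ x = 1 then c + 1 else if p = 1 ∧ x = n then c - 1 else c

lemma length_ellAux (n : ℕ) : ∀ (xs : List ℕ) (p : ℕ) (c : ℤ),
    (ellAux n p c xs).length = xs.length
  | [], _, _ => rfl
  | x :: xs, p, c => by simp [ellAux, length_ellAux n xs]

lemma getD_ellAux_succ (n : ℕ) : ∀ (xs : List ℕ) (p : ℕ) (c : ℤ) (i : ℕ),
    i + 1 < xs.length →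
    (ellAux n p c xs).getD (i + 1) 0 =
      ellStep n (xs.getD i 0) (xs.getD (i + 1) 0) ((ellAux n p c xs).getD i 0)
  | [], _, _, _, h => by simp at h
  | [_], _, _, _, h => by simp at h
  | x :: y :: xs, p, c, 0, _ => rfl
  | x :: y :: xs, p, c, i + 1, h =>
    getD_ellAux_succ n (y :: xs) x (ellStep n p x c) i (by simpa using h)

lemma length_ellList (n : ℕ) (π : List ℕ) : (ellList n π).length = π.length := by
  cases π <;> simp [ellList, length_ellAux]

lemma getD_ellList_succ (n : ℕ) (π : List ℕ) (i : ℕ) (h : i + 1 < π.length) :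
    (ellList n π).getD (i + 1) 0 =
      ellStep n (π.getD i 0) (π.getD (i + 1) 0) ((ellList n π).getD i 0) := by
  match π, i, h with
  | x :: y :: xs, 0, _ => rfl
  | x :: y :: xs, i + 1, h => exact getD_ellAux_succ n (y :: xs) x 0 i (by simpa using h)

variable {n : ℕ} {π : List ℕ}

/-- `τ_π(i + 1)`, with `0` past the end of the ride. -/
def tau (n : ℕ) (π : List ℕ) (i : ℕ) : ℤ := (tauList n π).getD i 0

lemma length_tauList (n : ℕ) (π : List ℕ) : (tauList n π).length = π.length := by
  simp [tauList, length_ellList]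

lemma tau_eq {i : ℕ} (h : i < π.length) :
    tau n π i = π.getD i 0 + ((ellList n π).getD i 0 - (ellList n π).foldr min 0) * n := by
  have h' : i < (ellList n π).length := by rwa [length_ellList]
  simp [tau, tauList, List.getD_eq_getElem?_getD, h, h']

lemma mem_tauList {x : ℤ} : x ∈ tauList n π ↔ ∃ i < π.length, tau n π i = x := by
  constructor
  · intro hx
    obtain ⟨i, hi, rfl⟩ := List.mem_iff_getElem.1 hx
    exact ⟨i, by rwa [length_tauList] at hi, by rw [tau, List.getD_eq_getElem _ _ hi]⟩
  · rintro ⟨i, hi, rfl⟩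
    have hi' : i < (tauList n π).length := by rwa [length_tauList]
    rw [tau, List.getD_eq_getElem _ _ hi']
    exact List.getElem_mem hi'

lemma tau_le_cw {i : ℕ} (hi : i < π.length) : tau n π i ≤ cw n π :=
  le_foldr_max (mem_tauList.2 ⟨i, hi, rfl⟩)

lemma acw_le_tau {i : ℕ} (hi : i < π.length) : acw n π ≤ tau n π i :=
  foldr_min_le (mem_tauList.2 ⟨i, hi, rfl⟩)

lemma tauList_ne_nil (hπ : π ≠ []) : tauList n π ≠ [] := by
  rw [← List.length_pos_iff, length_tauList]
  exact List.length_pos_iff.2 hπ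

lemma exists_tau_eq_cw (hπ : π ≠ []) : ∃ i < π.length, tau n π i = cw n π :=
  mem_tauList.1 (foldr_max_headD_mem (tauList_ne_nil hπ) 0)

lemma exists_tau_eq_acw (hπ : π ≠ []) : ∃ i < π.length, tau n π i = acw n π :=
  mem_tauList.1 (foldr_min_headD_mem (tauList_ne_nil hπ) 0)

lemma isUnitWalk_tau
    (hadj : ∀ i, i + 1 < π.length → cycAdj n (π.getD i 0) (π.getD (i + 1) 0)) :
    IsUnitWalk (tau n π) π.length := by
  intro i hi
  obtain ⟨hadj, -⟩ := hadj i hi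
  have key (c : ℤ) : ((π.getD (i + 1) 0 : ℕ) : ℤ) + (c - (ellList n π).foldr min 0) * n =
      tau n π i + ((π.getD (i + 1) 0 : ℤ) - π.getD i 0 + (c - (ellList n π).getD i 0) * n) := by
    rw [tau_eq (by omega)]
    ring
  rw [tau_eq hi, getD_ellList_succ n π i hi, key]
  unfold ellStep
  split_ifs <;> simp only [add_sub_cancel_left, sub_sub_cancel_left, sub_self, one_mul, neg_mul,
    zero_mul] <;> omega

lemma mod1Z_tau (hV : ∀ v ∈ π, 1 ≤ v ∧ v ≤ n) {i : ℕ} (hi : i < π.length) :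
    mod1Z n (tau n π i) = π.getD i 0 := by
  have hmem := hV _ (List.getD_eq_getElem π 0 hi ▸ List.getElem_mem hi)
  rw [tau_eq hi, mod1Z_add_mul, mod1Z_natCast hmem.1 hmem.2]

lemma one_le_tau (hV : ∀ v ∈ π, 1 ≤ v ∧ v ≤ n) {i : ℕ} (hi : i < π.length) : 1 ≤ tau n π i := by
  have hmem := hV _ (List.getD_eq_getElem π 0 hi ▸ List.getElem_mem hi)
  have hK : (ellList n π).foldr min 0 ≤ (ellList n π).getD i 0 := by
    rw [List.getD_eq_getElem _ _ (by rwa [length_ellList])]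
    exact foldr_min_le (List.getElem_mem _)
  rw [tau_eq hi]
  have := mul_nonneg (sub_nonneg.2 hK) (Nat.cast_nonneg (α := ℤ) n)
  omega

lemma exists_tau_le (hV : ∀ v ∈ π, 1 ≤ v ∧ v ≤ n) (hπ : π ≠ []) :
    ∃ i < π.length, tau n π i ≤ n := by
  suffices ∃ i < π.length, (ellList n π).getD i 0 = (ellList n π).foldr min 0 by
    obtain ⟨i, hi, he⟩ := this
    have hmem := hV _ (List.getD_eq_getElem π 0 hi ▸ List.getElem_mem hi)
    exact ⟨i, hi, by rw [tau_eq hi, he]; omega⟩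
  obtain ⟨x, xs, rfl⟩ := List.exists_cons_of_ne_nil hπ
  rcases foldr_min_eq_or_mem (ellList n (x :: xs)) 0 with h | h
  · exact ⟨0, by simp, h.symm ▸ rfl⟩
  · obtain ⟨i, hi, he⟩ := List.mem_iff_getElem.1 h
    rw [length_ellList] at hi
    exact ⟨i, hi, by rw [List.getD_eq_getElem _ _ (by rwa [length_ellList]), he]⟩

lemma tau_eq_of_lift (hn : 3 ≤ n) (hV : ∀ v ∈ π, 1 ≤ v ∧ v ≤ n)
    (hadj : ∀ i, i + 1 < π.length → cycAdj n (π.getD i 0) (π.getD (i + 1) 0))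
    {σ : ℕ → ℤ} (hσ : IsUnitWalk σ π.length)
    (hmod : ∀ i < π.length, mod1Z n (σ i) = π.getD i 0) (hσ1 : ∀ i < π.length, 1 ≤ σ i)
    (hσn : ∃ i < π.length, σ i ≤ n) : ∀ i < π.length, tau n π i = σ i := by
  have hmodEq : ∀ i < π.length, tau n π i ≡ σ i [ZMOD n] := fun i hi =>
    (mod1Z_eq_mod1Z_iff (by omega)).1 (by rw [mod1Z_tau hV hi, hmod i hi])
  have hconst := (isUnitWalk_tau hadj).sub_eq_of_modEq hn hσ hmodEq
  obtain ⟨i₁, hi₁, hσi₁⟩ := hσn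
  obtain ⟨i₀, hi₀, hτi₀⟩ := exists_tau_le hV (List.ne_nil_of_length_pos (by omega))
  have h0 : σ 0 - tau n π 0 = 0 := by
    refine Int.eq_zero_of_abs_lt_dvd (hmodEq 0 (by omega)).dvd (abs_lt.2 ⟨?_, ?_⟩)
    · have := hconst i₀ hi₀
      have := hσ1 i₀ hi₀
      omega
    · have := hconst i₁ hi₁
      have := one_le_tau hV hi₁
      omega
  intro i hi
  have := hconst i hi
  omega

end Winding

section Rides

lemma isChain_iff_getD {r : ℕ → ℕ → Prop} {l : List ℕ} :
    l.IsChain r ↔ ∀ i, i + 1 < l.length → r (l.getD i 0) (l.getD (i + 1) 0) := by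
  rw [List.isChain_iff_getElem]
  refine forall_congr' fun i => forall_congr' fun hi => ?_
  rw [List.getD_eq_getElem _ _ hi, List.getD_eq_getElem _ _ (show i < l.length by omega)]

lemma cycAdj_symm {n a b : ℕ} (h : cycAdj n a b) : cycAdj n b a := by
  obtain ⟨hab, h1, h2, h3, h4⟩ := h
  exact ⟨by tauto, h3, h4, h1, h2⟩

namespace Feasible

variable {R : Scenario} {π : List ℕ}

lemma ne_nil (h : Feasible R π) : π ≠ [] := h.1.1

lemma adj (h : Feasible R π) : ∀ i, i + 1 < π.length → R.adj (π.getD i 0) (π.getD (i + 1) 0) :=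
  isChain_iff_getD.1 h.1.2

lemma getD_zero (h : Feasible R π) : π.getD 0 0 = R.s0 := by
  obtain ⟨x, l, rfl⟩ := List.exists_cons_of_ne_nil h.ne_nil
  simpa using h.2.1

lemma getD_last (h : Feasible R π) : π.getD (π.length - 1) 0 = R.t0 := by
  have := h.2.2.1
  rw [List.getLast?_eq_getElem?] at this
  rw [List.getD_eq_getElem?_getD, this]
  rfl

end Feasible

abbrev cycleScenario (n : ℕ) (w : ℕ → ℕ → ℚ) (t0 : ℕ) (C : Finset (ℕ × ℕ)) : Scenario :=
  ⟨cycAdj n, w, 1, t0, C⟩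

lemma Feasible.mem_Icc {n : ℕ} {w : ℕ → ℕ → ℚ} {t0 : ℕ} {C : Finset (ℕ × ℕ)} {π : List ℕ}
    (hn : 1 ≤ n) (h : Feasible (cycleScenario n w t0 C) π) : ∀ v ∈ π, 1 ≤ v ∧ v ≤ n := by
  intro v hv
  obtain ⟨i, hi, rfl⟩ := List.mem_iff_getElem.1 hv
  rw [← List.getD_eq_getElem π 0 hi]
  by_cases hnext : i + 1 < π.length
  · exact ⟨(h.adj i hnext).2.1, (h.adj i hnext).2.2.1⟩
  rcases Nat.eq_zero_or_pos i with rfl | hpos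
  · rw [h.getD_zero]
    exact ⟨le_rfl, hn⟩
  · have := h.adj (i - 1) (by omega)
    rw [Nat.sub_add_cancel hpos] at this
    exact ⟨this.2.2.2.1, this.2.2.2.2⟩

end Rides

section Projection

variable {n : ℕ} {w : ℕ → ℕ → ℚ} {g : ℕ → ℤ} {L : ℕ}

def liftWeight (n : ℕ) (w : ℕ → ℕ → ℚ) (k : ℤ) : ℚ := w (mod1Z n k) (mod1Z n (k + 1))

lemma liftWeight_periodic : Function.Periodic (liftWeight n w) n := fun k => by
  have h := mod1Z_add_mul (n := n) k 1
  have h' := mod1Z_add_mul (n := n) (k + 1) 1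
  rw [one_mul] at h h'
  rw [liftWeight, liftWeight, h, add_right_comm, h']

lemma liftWeight_nonneg (hw : ∀ a b, 0 < w a b) (k : ℤ) : 0 ≤ liftWeight n w k := (hw _ _).le

def projRide (n : ℕ) (g : ℕ → ℤ) (L : ℕ) : List ℕ := (List.range L).map fun i => mod1Z n (g i)

lemma length_projRide : (projRide n g L).length = L := by simp [projRide]

lemma getElem?_projRide {i : ℕ} (hi : i < L) : (projRide n g L)[i]? = some (mod1Z n (g i)) := by
  simp [projRide, hi]

lemma getD_projRide {i : ℕ} (hi : i < L) : (projRide n g L).getD i 0 = mod1Z n (g i) := by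
  rw [List.getD_eq_getElem?_getD, getElem?_projRide hi]
  rfl

lemma isChain_projRide (hn : 0 < n) (hg : IsUnitWalk g L) :
    (projRide n g L).IsChain (cycAdj n) := by
  rw [isChain_iff_getD]
  intro i hi
  rw [length_projRide] at hi
  rw [getD_projRide (by omega), getD_projRide hi]
  rcases hg i hi with h | h <;> rw [h]
  · exact cycAdj_mod1Z_add_one hn _
  · exact cycAdj_symm (by simpa using cycAdj_mod1Z_add_one hn (g i - 1))

lemma cost_projRide (hwsym : ∀ a b, w a b = w b a) (hg : IsUnitWalk g L) :
    cost w (projRide n g L) =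
      ∑ i ∈ Finset.range (L - 1), liftWeight n w (min (g i) (g (i + 1))) := by
  rw [cost_eq_sum, length_projRide]
  refine Finset.sum_congr rfl fun i hi => ?_
  rw [Finset.mem_range] at hi
  rw [getD_projRide (by omega), getD_projRide (by omega)]
  rcases hg i (by omega) with h | h <;> rw [h]
  · rw [min_eq_left (by omega)]
    rfl
  · rw [min_eq_right (by omega), liftWeight, sub_add_cancel, hwsym]

lemma projRide_tau {π : List ℕ} (hV : ∀ v ∈ π, 1 ≤ v ∧ v ≤ n) :
    projRide n (tau n π) π.length = π := by
  refine List.ext_getElem length_projRide fun i hi hi' => ?_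
  rw [← List.getD_eq_getElem _ 0 hi, ← List.getD_eq_getElem _ 0 hi', getD_projRide hi',
    mod1Z_tau hV hi']

lemma tau_projRide (hn : 3 ≤ n) (hg : IsUnitWalk g L) (hg1 : ∀ i < L, 1 ≤ g i)
    (hgn : ∃ i < L, g i ≤ n) : ∀ i < L, tau n (projRide n g L) i = g i := by
  have hV : ∀ v ∈ projRide n g L, 1 ≤ v ∧ v ≤ n := by
    simp only [projRide, List.mem_map]
    rintro v ⟨i, -, rfl⟩
    exact ⟨one_le_mod1Z _, mod1Z_le (by omega) _⟩
  simpa [length_projRide] using tau_eq_of_lift hn hV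
    (isChain_iff_getD.1 (isChain_projRide (by omega) hg)) (by rwa [length_projRide])
    (fun i hi => (getD_projRide (by rwa [length_projRide] at hi)).symm)
    (by rwa [length_projRide]) (by rwa [length_projRide])

lemma cw_projRide_le (hn : 3 ≤ n) (hg : IsUnitWalk g L) (hg1 : ∀ i < L, 1 ≤ g i)
    (hgn : ∃ i < L, g i ≤ n) {c : ℤ} (hc : ∀ i < L, g i ≤ c) : cw n (projRide n g L) ≤ c := by
  have hL : 0 < L := by obtain ⟨i₀, hi₀, -⟩ := hgn; omega
  obtain ⟨i, hi, hcw⟩ := exists_tau_eq_cw (n := n)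
    (List.ne_nil_of_length_pos (by rwa [length_projRide]) : projRide n g L ≠ [])
  rw [length_projRide] at hi
  rw [← hcw, tau_projRide hn hg hg1 hgn i hi]
  exact hc i hi

end Projection

section Detours

lemma getElem?_detour (A B : List ℕ) (x p : ℕ) {j : ℕ} (hj : j ≠ A.length + 1) :
    (A ++ x :: B)[if j ≤ A.length then j else j - 2]? = (A ++ x :: p :: x :: B)[j]? := by
  split_ifs with h
  · rcases h.lt_or_eq with h | rfl
    · simp [List.getElem?_append_left h]
    · simp
  · obtain ⟨k, rfl⟩ : ∃ k, j = A.length + 2 + k := ⟨j - A.length - 2, by omega⟩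
    rw [List.getElem?_append_right (by omega), List.getElem?_append_right (by omega)]
    rcases k with _ | k
    · simp
    · simp [show A.length + 2 + (k + 1) - 2 - A.length = k + 1 by omega,
        show A.length + 2 + (k + 1) - A.length = k + 3 by omega]

lemma Satisfies.of_detour {A B : List ℕ} {x p s t : ℕ}
    (h : Satisfies (A ++ x :: p :: x :: B) s t) (hs : s ≠ p) (ht : t ≠ p) :
    Satisfies (A ++ x :: B) s t := by
  obtain ⟨i, j, hij, hi, hj⟩ := h
  have hp : (A ++ x :: p :: x :: B)[A.length + 1]? = some p := by simp
  have hi' : i ≠ A.length + 1 := by rintro rfl; exact hs (by simpa [hp] using hi.symm)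
  have hj' : j ≠ A.length + 1 := by rintro rfl; exact ht (by simpa [hp] using hj.symm)
  refine ⟨_, _, ?_, (getElem?_detour A B x p hi').trans hi, (getElem?_detour A B x p hj').trans hj⟩
  split_ifs <;> omega

variable {R : Scenario}

lemma Feasible.of_detour {A B : List ℕ} {x p : ℕ} (h : Feasible R (A ++ x :: p :: x :: B))
    (hp : p ∉ VC R.C) : Feasible R (A ++ x :: B) := by
  obtain ⟨⟨-, hchain⟩, hhead, hlast, hsat⟩ := h
  refine ⟨⟨by simp, ?_⟩, by cases A <;> simpa using hhead, by simpa using hlast, ?_⟩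
  · rw [List.Chain', List.isChain_append] at hchain ⊢
    obtain ⟨h1, h2, h3⟩ := hchain
    exact ⟨h1, (List.isChain_cons_cons.1 (List.isChain_cons_cons.1 h2).2).2, by simpa using h3⟩
  · intro r hr
    have hmem : r.1 ∈ VC R.C ∧ r.2 ∈ VC R.C :=
      ⟨Finset.mem_union_left _ (Finset.mem_image_of_mem _ hr),
        Finset.mem_union_right _ (Finset.mem_image_of_mem _ hr)⟩
    exact (hsat r hr).of_detour (fun h => hp (h ▸ hmem.1)) (fun h => hp (h ▸ hmem.2))

lemma not_optimal_of_detour (hw : ∀ a b, 0 < R.w a b) {A B : List ℕ} {x p : ℕ}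
    (h : Feasible R (A ++ x :: p :: x :: B)) (hp : p ∉ VC R.C) :
    ¬ Optimal R (A ++ x :: p :: x :: B) := fun hopt => by
  have := hopt.2 _ (h.of_detour hp)
  rw [cost_detour] at this
  linarith [hw x p, hw p x]

lemma Optimal.getD_mem_VC_of_pred_eq_succ (hw : ∀ a b, 0 < R.w a b) {π : List ℕ}
    (hopt : Optimal R π) {i : ℕ} (h0 : 0 < i) (hi : i + 1 < π.length)
    (heq : π.getD (i - 1) 0 = π.getD (i + 1) 0) : π.getD i 0 ∈ VC R.C := by
  rw [List.getD_eq_getElem _ _ (by omega), List.getD_eq_getElem _ _ hi] at heq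
  rw [List.getD_eq_getElem _ _ (by omega)]
  have hdecomp : π = π.take (i - 1) ++ π[i - 1] :: π[i] :: π[i - 1] :: π.drop (i + 2) := by
    have e1 : π.drop (i - 1) = π[i - 1] :: π.drop i := by
      rw [List.drop_eq_getElem_cons (by omega), Nat.sub_add_cancel h0]
    have e2 : π.drop i = π[i] :: π[i + 1] :: π.drop (i + 2) := by
      rw [List.drop_eq_getElem_cons (by omega), List.drop_eq_getElem_cons (by omega)]
    conv_lhs => rw [← List.take_append_drop (i - 1) π, e1, e2]
    rw [heq]
  by_contra hp
  rw [hdecomp] at hopt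
  exact not_optimal_of_detour hw hopt.1 hp hopt

end Detours

section Extremes

variable {n : ℕ} {w : ℕ → ℕ → ℚ} {t0 : ℕ} {C : Finset (ℕ × ℕ)} {π : List ℕ}

lemma Optimal.mod1Z_tau_mem (hn : 1 ≤ n) (hw : ∀ a b, 0 < w a b)
    (hopt : Optimal (cycleScenario n w t0 C) π) {i : ℕ} (hi : i < π.length)
    (hext : (∀ j < π.length, tau n π j ≤ tau n π i) ∨ (∀ j < π.length, tau n π i ≤ tau n π j)) :
    mod1Z n (tau n π i) ∈ VC C ∪ {1, t0} := by
  have hV := hopt.1.mem_Icc hn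
  rw [mod1Z_tau hV hi]
  rcases Nat.eq_zero_or_pos i with rfl | h0
  · rw [hopt.1.getD_zero]
    simp
  by_cases hnext : i + 1 < π.length
  · refine Finset.mem_union_left _ (hopt.getD_mem_VC_of_pred_eq_succ hw h0 hnext ?_)
    rw [← mod1Z_tau hV (by omega), ← mod1Z_tau hV hnext,
      (isUnitWalk_tau hopt.1.adj).pred_eq_succ_of_extr h0 hnext hext]
  · rw [show i = π.length - 1 by omega, hopt.1.getD_last]
    simp

lemma Optimal.mod1Z_cw_mem (hn : 1 ≤ n) (hw : ∀ a b, 0 < w a b)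
    (hopt : Optimal (cycleScenario n w t0 C) π) : mod1Z n (cw n π) ∈ VC C ∪ {1, t0} := by
  obtain ⟨i, hi, hcw⟩ := exists_tau_eq_cw hopt.1.ne_nil
  rw [← hcw]
  exact hopt.mod1Z_tau_mem hn hw hi (Or.inl fun j hj => hcw ▸ tau_le_cw hj)

lemma Optimal.mod1Z_acw_mem (hn : 1 ≤ n) (hw : ∀ a b, 0 < w a b)
    (hopt : Optimal (cycleScenario n w t0 C) π) : mod1Z n (acw n π) ∈ VC C ∪ {1, t0} := by
  obtain ⟨i, hi, hacw⟩ := exists_tau_eq_acw hopt.1.ne_nil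
  rw [← hacw]
  exact hopt.mod1Z_tau_mem hn hw hi (Or.inr fun j hj => hacw ▸ acw_le_tau hj)

end Extremes

section LowerBound

open Finset

variable {n : ℕ} {w : ℕ → ℕ → ℚ} {t0 : ℕ} {C : Finset (ℕ × ℕ)} {π : List ℕ}

lemma Feasible.tau_zero_modEq (hn : 1 ≤ n) (hπ : Feasible (cycleScenario n w t0 C) π) :
    tau n π 0 ≡ 1 [ZMOD n] := by
  have := (mod1Z_modEq (n := n) (by omega) (tau n π 0)).symm
  rwa [mod1Z_tau (hπ.mem_Icc hn) (List.length_pos_iff.2 hπ.ne_nil), hπ.getD_zero] at this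

lemma Feasible.tau_last_modEq (hn : 1 ≤ n) (hπ : Feasible (cycleScenario n w t0 C) π) :
    tau n π (π.length - 1) ≡ t0 [ZMOD n] := by
  have := (mod1Z_modEq (n := n) (by omega) (tau n π (π.length - 1))).symm
  have hL := List.length_pos_iff.2 hπ.ne_nil
  rwa [mod1Z_tau (hπ.mem_Icc hn) (by omega), hπ.getD_last] at this

lemma two_mul_add_min_le_cost (hn : 3 ≤ n) (hw : ∀ a b, 0 < w a b)
    (hwsym : ∀ a b, w a b = w b a) (ht0 : 1 ≤ t0 ∧ t0 ≤ n)
    (hπ : Feasible (cycleScenario n w t0 C) π) (hspan : acw n π + 2 * n ≤ cw n π) :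
    2 * ∑ k ∈ Ico (1 : ℤ) (1 + n), liftWeight n w k +
        min (∑ k ∈ Ico (1 : ℤ) t0, liftWeight n w k)
          (∑ k ∈ Ico (1 : ℤ) (1 + n), liftWeight n w k - ∑ k ∈ Ico (1 : ℤ) t0, liftWeight n w k) ≤
      cost w π := by
  have hf : Function.Periodic (liftWeight n w) n := liftWeight_periodic
  have hf0 := liftWeight_nonneg (n := n) hw
  have hL : 0 < π.length := List.length_pos_iff.2 hπ.ne_nil
  have hg := isUnitWalk_tau hπ.adj
  obtain ⟨im, him, hm⟩ := exists_tau_eq_acw hπ.ne_nil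
  obtain ⟨iM, hiM, hM⟩ := exists_tau_eq_cw hπ.ne_nil
  have hB := hg.max_sum_Ico_le_sum_min_of_periodic hL him hiM
    (fun j hj => hm ▸ acw_le_tau hj) (fun j hj => hM ▸ tau_le_cw hj) hf hf0 (by rwa [hm, hM])
  rw [← cost_projRide hwsym hg, projRide_tau (hπ.mem_Icc (by omega)),
    show (2 : ℤ) * n = (2 : ℕ) * n by norm_num, sum_Ico_add_mul_period hf (by omega),
    sum_Ico_period_eq hf (by omega) _ 1, Nat.cast_ofNat, ← mul_assoc,
    show (2 : ℚ) * 2 = 4 by norm_num] at hB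
  have ha := hπ.tau_zero_modEq (by omega)
  have hb := hπ.tau_last_modEq (by omega)
  set W := ∑ k ∈ Ico (1 : ℤ) (1 + n), liftWeight n w k
  set D := ∑ k ∈ Ico (1 : ℤ) t0, liftWeight n w k
  have hDW : D + ∑ k ∈ Ico (t0 : ℤ) (n + 1), liftWeight n w k = W := by
    rw [sum_Ico_consecutive_int _ (by omega) (by omega), add_comm (n : ℤ)]
  have hD : 0 ≤ D := sum_nonneg fun k _ => hf0 k
  have hD' : 0 ≤ ∑ k ∈ Ico (t0 : ℤ) (n + 1), liftWeight n w k := sum_nonneg fun k _ => hf0 k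
  rcases le_or_gt (tau n π 0) (tau n π (π.length - 1)) with hab | hab
  · rw [min_eq_left hab, max_eq_right hab] at hB
    obtain ⟨l, hl⟩ := exists_sum_Ico_eq_add_mul hf (by omega) ha hb (by omega) (by omega)
    rw [sum_Ico_period_eq hf (by omega) _ 1] at hl
    exact two_mul_add_min_le hD (by linarith) hl hB
  · rw [min_eq_right hab.le, max_eq_left hab.le] at hB
    have ha' : tau n π 0 ≡ n + 1 [ZMOD n] := ha.trans (Int.modEq_iff_dvd.2 ⟨1, by ring⟩)
    obtain ⟨l, hl⟩ := exists_sum_Ico_eq_add_mul hf (by omega) hb ha' (by omega) (by omega)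
    rw [sum_Ico_period_eq hf (by omega) _ 1,
      show ∑ k ∈ Ico (t0 : ℤ) (n + 1), liftWeight n w k = W - D by linarith] at hl
    have := two_mul_add_min_le (by linarith) (by linarith) hl hB
    rwa [sub_sub_cancel, min_comm] at this

end LowerBound

section UniversalRides

open Finset

variable {n : ℕ} {w : ℕ → ℕ → ℚ} {t0 : ℕ} {C : Finset (ℕ × ℕ)}

lemma feasible_projRide (hn : 0 < n) {g : ℕ → ℤ} {L : ℕ} (hg : IsUnitWalk g L) (hL : 2 * n ≤ L)
    (hfirst : ∀ i < 2 * n, g i = i + 1) (hlast : mod1Z n (g (L - 1)) = t0)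
    (hC : ∀ r ∈ C, 1 ≤ r.1 ∧ r.1 ≤ n ∧ 1 ≤ r.2 ∧ r.2 ≤ n) :
    Feasible (cycleScenario n w t0 C) (projRide n g L) := by
  have hlap : ∀ v : ℕ, 1 ≤ v → v ≤ n →
      (projRide n g L)[v - 1]? = some v ∧ (projRide n g L)[n + v - 1]? = some v := by
    intro v hv1 hvn
    rw [getElem?_projRide (by omega), hfirst _ (by omega), getElem?_projRide (by omega),
      hfirst _ (by omega), show ((n + v - 1 : ℕ) : ℤ) + 1 = ((v : ℕ) : ℤ) + 1 * n by omega,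
      mod1Z_add_mul, show ((v - 1 : ℕ) : ℤ) + 1 = ((v : ℕ) : ℤ) by omega, mod1Z_natCast hv1 hvn]
    exact ⟨rfl, rfl⟩
  refine ⟨⟨List.ne_nil_of_length_pos (by rw [length_projRide]; omega), isChain_projRide hn hg⟩,
    ?_, ?_, fun r hr => ?_⟩
  · simpa [List.head?_eq_getElem?] using (hlap 1 le_rfl hn).1
  · rw [List.getLast?_eq_getElem?, length_projRide, getElem?_projRide (by omega), hlast]
  · obtain ⟨h1, h2, h3, h4⟩ := hC r hr
    exact ⟨_, _, by omega, (hlap r.1 h1 h2).1, (hlap r.2 h3 h4).2⟩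

lemma sum_Ico_liftWeight_two_laps (hn : 0 < n) :
    ∑ k ∈ Ico (1 : ℤ) (1 + 2 * n), liftWeight n w k =
      2 * ∑ k ∈ Ico (1 : ℤ) (1 + n), liftWeight n w k := by
  simpa using sum_Ico_add_mul_period liftWeight_periodic (by omega : (0 : ℤ) ≤ n) 1 2

lemma exists_feasible_cost_eq_two_mul_add (hn : 3 ≤ n) (hwsym : ∀ a b, w a b = w b a)
    (ht0 : 1 ≤ t0 ∧ t0 ≤ n) (hC : ∀ r ∈ C, 1 ≤ r.1 ∧ r.1 ≤ n ∧ 1 ≤ r.2 ∧ r.2 ≤ n) :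
    ∃ π, Feasible (cycleScenario n w t0 C) π ∧ cw n π ≤ 3 * n ∧
      cost w π = 2 * ∑ k ∈ Ico (1 : ℤ) (1 + n), liftWeight n w k +
        ∑ k ∈ Ico (1 : ℤ) t0, liftWeight n w k := by
  have hg : IsUnitWalk (fun i : ℕ => (i : ℤ) + 1) (2 * n + t0) := fun i _ => by
    left; push_cast; ring
  refine ⟨projRide n (fun i : ℕ => (i : ℤ) + 1) (2 * n + t0),
    feasible_projRide (by omega) hg (by omega) (fun i _ => rfl) ?_ hC,
    cw_projRide_le hn hg (fun i _ => by omega) ⟨0, by omega, by omega⟩ fun i hi => by omega, ?_⟩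
  · rw [show ((2 * n + t0 - 1 : ℕ) : ℤ) + 1 = ((t0 : ℕ) : ℤ) + 2 * n by omega, mod1Z_add_mul,
      mod1Z_natCast ht0.1 ht0.2]
  · rw [cost_projRide hwsym hg]
    calc _ = ∑ k ∈ Ico (1 : ℤ) (1 + (2 * n + t0 - 1 : ℕ)), liftWeight n w k := by
          rw [← sum_range_add_eq_sum_Ico]
          exact sum_congr rfl fun i _ => by congr 1; omega
      _ = ∑ k ∈ Ico (1 : ℤ) (1 + 2 * n), liftWeight n w k +
            ∑ k ∈ Ico (1 + 2 * n : ℤ) (t0 + 2 * n), liftWeight n w k := by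
          rw [sum_Ico_consecutive_int _ (by omega) (by omega)]
          congr 2
          omega
      _ = _ := by
          rw [sum_Ico_liftWeight_two_laps (by omega),
            sum_Ico_add_of_periodic (by simpa using liftWeight_periodic.nat_mul 2)]

/-- `1, 2, …, 2n + 1, 2n, 2n - 1, …`: two laps clockwise, then back anticlockwise. -/
def returnWalk (n i : ℕ) : ℤ := if i ≤ 2 * n then i + 1 else 4 * n + 1 - i

lemma isUnitWalk_returnWalk (L : ℕ) : IsUnitWalk (returnWalk n) L := fun i _ => by
  unfold returnWalk
  split_ifs <;> omega

lemma cost_projRide_returnWalk (hn : 0 < n) (hwsym : ∀ a b, w a b = w b a)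
    (ht0 : 1 ≤ t0 ∧ t0 ≤ n) :
    cost w (projRide n (returnWalk n) (3 * n + 2 - t0)) =
      3 * ∑ k ∈ Ico (1 : ℤ) (1 + n), liftWeight n w k - ∑ k ∈ Ico (1 : ℤ) t0, liftWeight n w k := by
  have hup : ∀ i ∈ range (2 * n), liftWeight n w (min (returnWalk n i) (returnWalk n (i + 1))) =
      liftWeight n w (1 + i) := fun i hi => by
    rw [mem_range] at hi
    simp only [returnWalk, if_pos hi.le, if_pos (show i + 1 ≤ 2 * n by omega)]
    congr 1
    omega
  have hdown : ∀ j ∈ range (n + 1 - t0), liftWeight n w (min (returnWalk n (2 * n + j))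
      (returnWalk n (2 * n + j + 1))) = liftWeight n w (2 * n - j) := fun j _ => by
    unfold returnWalk
    congr 1
    split_ifs <;> omega
  rw [cost_projRide hwsym (isUnitWalk_returnWalk _),
    show 3 * n + 2 - t0 - 1 = 2 * n + (n + 1 - t0) by omega,
    sum_range_add, sum_congr rfl hup, sum_congr rfl hdown, sum_range_add_eq_sum_Ico,
    sum_range_sub_eq_sum_Ico, Nat.cast_mul, Nat.cast_ofNat, sum_Ico_liftWeight_two_laps hn,
    show 2 * (n : ℤ) + 1 - ((n + 1 - t0 : ℕ) : ℤ) = t0 + n by omega,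
    show 2 * (n : ℤ) + 1 = (n + 1) + n by ring, sum_Ico_add_of_periodic liftWeight_periodic,
    ← sum_Ico_consecutive_int _ (by omega : (1 : ℤ) ≤ t0) (by omega : (t0 : ℤ) ≤ 1 + n),
    add_comm 1 (n : ℤ)]
  ring

lemma exists_feasible_cost_eq_three_mul_sub (hn : 3 ≤ n) (hwsym : ∀ a b, w a b = w b a)
    (ht0 : 1 ≤ t0 ∧ t0 ≤ n) (hC : ∀ r ∈ C, 1 ≤ r.1 ∧ r.1 ≤ n ∧ 1 ≤ r.2 ∧ r.2 ≤ n) :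
    ∃ π, Feasible (cycleScenario n w t0 C) π ∧ cw n π ≤ 3 * n ∧
      cost w π = 3 * ∑ k ∈ Ico (1 : ℤ) (1 + n), liftWeight n w k -
        ∑ k ∈ Ico (1 : ℤ) t0, liftWeight n w k := by
  have hg := isUnitWalk_returnWalk (n := n) (3 * n + 2 - t0)
  refine ⟨projRide n (returnWalk n) (3 * n + 2 - t0),
    feasible_projRide (by omega) hg (by omega) (fun i _ => if_pos (by omega)) ?_ hC,
    cw_projRide_le hn hg (fun i _ => by unfold returnWalk; split_ifs <;> omega)
      ⟨0, by omega, by rw [returnWalk, if_pos (Nat.zero_le _)]; omega⟩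
      (fun i _ => by unfold returnWalk; split_ifs <;> omega),
    cost_projRide_returnWalk (by omega) hwsym ht0⟩
  rw [returnWalk, if_neg (by omega),
    show 4 * (n : ℤ) + 1 - ((3 * n + 2 - t0 - 1 : ℕ) : ℤ) = ((t0 : ℕ) : ℤ) + 1 * n by omega,
    mod1Z_add_mul, mod1Z_natCast ht0.1 ht0.2]

end UniversalRides

section Main

open Finset

variable {n : ℕ} {w : ℕ → ℕ → ℚ} {t0 : ℕ} {C : Finset (ℕ × ℕ)}

lemma exists_optimal_cw_le (hn : 3 ≤ n) (hw : ∀ a b, 0 < w a b) (hwsym : ∀ a b, w a b = w b a)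
    (ht0 : 1 ≤ t0 ∧ t0 ≤ n) (hC : ∀ r ∈ C, 1 ≤ r.1 ∧ r.1 ≤ n ∧ 1 ≤ r.2 ∧ r.2 ≤ n) {π₀ : List ℕ}
    (hopt : Optimal (cycleScenario n w t0 C) π₀) :
    ∃ π, Optimal (cycleScenario n w t0 C) π ∧ cw n π ≤ 3 * n := by
  by_cases hcw : cw n π₀ ≤ 3 * n
  · exact ⟨π₀, hopt, hcw⟩
  have hspan : acw n π₀ + 2 * n ≤ cw n π₀ := by
    obtain ⟨i, hi, hle⟩ := exists_tau_le (hopt.1.mem_Icc (by omega)) hopt.1.ne_nil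
    have := acw_le_tau (n := n) hi
    omega
  have hlow := two_mul_add_min_le_cost hn hw hwsym ht0 hopt.1 hspan
  have optimal_of_cost_le : ∀ π, Feasible (cycleScenario n w t0 C) π → cost w π ≤ cost w π₀ →
      Optimal (cycleScenario n w t0 C) π := fun π hπ hle =>
    ⟨hπ, fun π' hπ' => hle.trans (hopt.2 π' hπ')⟩
  rcases le_total (∑ k ∈ Ico (1 : ℤ) t0, liftWeight n w k)
    (∑ k ∈ Ico (1 : ℤ) (1 + n), liftWeight n w k - ∑ k ∈ Ico (1 : ℤ) t0, liftWeight n w k)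
    with hD | hD
  · obtain ⟨π, hπ, hcwπ, hcost⟩ := exists_feasible_cost_eq_two_mul_add hn hwsym ht0 hC
    rw [min_eq_left hD] at hlow
    exact ⟨π, optimal_of_cost_le π hπ (by rw [hcost]; exact hlow), hcwπ⟩
  · obtain ⟨π, hπ, hcwπ, hcost⟩ := exists_feasible_cost_eq_three_mul_sub hn hwsym ht0 hC
    rw [min_eq_right hD] at hlow
    exact ⟨π, optimal_of_cost_le π hπ (by rw [hcost]; linarith), hcwπ⟩

end Main

/-- for a cycle scenario (with `s₀ = 1`) admitting an optimal ride,
there exists an optimal ride `π` with `cw(π) ≤ 3n` and both `cw(π) mod n` and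
`acw(π) mod n` in `V_C ∪ {s₀,t₀}`. -/
theorem exists_optimal_bounded_winding (n : ℕ) (hn : 3 ≤ n) (w : ℕ → ℕ → ℚ)
    (hwpos : ∀ a b, 0 < w a b) (hwsym : ∀ a b, w a b = w b a)
    (t0 : ℕ) (C : Finset (ℕ × ℕ)) (ht0 : 1 ≤ t0 ∧ t0 ≤ n)
    (hC : ∀ r ∈ C, 1 ≤ r.1 ∧ r.1 ≤ n ∧ 1 ≤ r.2 ∧ r.2 ≤ n)
    (hex : ∃ π, Optimal ⟨cycAdj n, w, 1, t0, C⟩ π) :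
    ∃ π, Optimal ⟨cycAdj n, w, 1, t0, C⟩ π ∧ cw n π ≤ 3 * n ∧
      mod1Z n (cw n π) ∈ VC C ∪ {1, t0} ∧
      mod1Z n (acw n π) ∈ VC C ∪ {1, t0} := by
  obtain ⟨π₀, hopt₀⟩ := hex
  obtain ⟨π, hopt, hcw⟩ := exists_optimal_cw_le hn hwpos hwsym ht0 hC hopt₀
  exact ⟨π, hopt, hcw, hopt.mod1Z_cw_mem (by omega) hwpos, hopt.mod1Z_acw_mem (by omega) hwpos⟩

end RideSharing
end

section
/- Let α, β ∈ V° with {α mod n, β mod n} ⊆ V_C ∪ {s₀,t₀}, 1 ≤ α, β ≤ 3n, such that for each x ∈ V_C ∪ {s₀,t₀} there is v_x with α ≤ v_x ≤ β and v_x mod n = x; let v_{s₀}, v_{t₀} ∈ [α,β] with v_{s₀} mod n = s₀, v_{t₀} mod n = t₀; let (s°,t°) ∈ {(α,β),(β,α)}. If π° is feasible for the path scenario ⟨G°,(v_{s₀},v_{t₀}), C°_{α,β} ∪ {(s°,t°)}⟩, then the projected sequence π°₁ mod n, …, π°_{len(π°)} mod n is a feasible ride for the cycle scenario R. -/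
namespace RideSharing

/-! Projection by `mod1 n` turns path edges into cycle edges and keeps the endpoints, so only
the requests need thought. Lift a request `(x, y) ∈ C` to representatives in `[α, β]`. If both
are uniquely represented there, the lifted request lies in `C°_{α,β}`. Otherwise some residue
occurs twice in `[α, β]`, which then contains a full period `[a, a + n]` with `a` in that residue
class; inside it one finds representatives of `x` and `y` in the order in which the ride, going
from `α` to `β` or back, has to cross them (discrete intermediate value theorem). -/

lemma one_le_mod1 (n v : ℕ) : 1 ≤ mod1 n v := Nat.le_add_left 1 _

lemma mod1_le {n : ℕ} (hn : 0 < n) (v : ℕ) : mod1 n v ≤ n :=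
  Nat.mod_lt _ hn

lemma mod1_mod1 (n v : ℕ) : mod1 n (mod1 n v) = mod1 n v := by
  simp [mod1]

lemma mod1_add_self {n v : ℕ} (hv : 1 ≤ v) : mod1 n (v + n) = mod1 n v := by
  rw [mod1, mod1, Nat.sub_add_comm hv, Nat.add_mod_right]

lemma mod1_succ {n a : ℕ} (hn : 0 < n) (ha : 1 ≤ a) :
    mod1 n (a + 1) = mod1 n a + 1 ∨ (mod1 n a = n ∧ mod1 n (a + 1) = 1) := by
  obtain rfl | hn1 := eq_or_ne n 1
  · simp [mod1, Nat.mod_one]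
  have hlt : (a - 1) % n < n := Nat.mod_lt _ hn
  have hsucc : a + 1 - 1 = (a - 1) + 1 := by omega
  rw [mod1, mod1, hsucc, Nat.add_mod_eq_ite, Nat.one_mod_eq_one.mpr hn1]
  split_ifs <;> omega

lemma cycAdj_mod1_of_pathAdj {n m a b : ℕ} (hn : 0 < n) (h : pathAdj m a b) :
    cycAdj n (mod1 n a) (mod1 n b) := by
  obtain ⟨hab, ha, -, hb, -⟩ := h
  refine ⟨?_, one_le_mod1 n a, mod1_le hn a, one_le_mod1 n b, mod1_le hn b⟩
  rcases hab with rfl | rfl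
  · rcases mod1_succ hn ha with h | h
    · exact Or.inl h
    · exact Or.inr (Or.inr (Or.inl h))
  · rcases mod1_succ hn hb with h | ⟨h₁, h₂⟩
    · exact Or.inr (Or.inl h)
    · exact Or.inr (Or.inr (Or.inr ⟨h₂, h₁⟩))

lemma add_le_of_mod1_eq {n x y : ℕ} (hx : 1 ≤ x) (hxy : x < y) (h : mod1 n x = mod1 n y) :
    x + n ≤ y := by
  have hmod : x - 1 ≡ y - 1 [MOD n] := Nat.add_right_cancel h
  have := Nat.le_of_dvd (by omega) ((Nat.modEq_iff_dvd' (by omega)).mp hmod)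
  omega

lemma exists_mod1_eq_mem_Ioc {n : ℕ} (hn : 0 < n) (a x : ℕ) :
    ∃ y, a < y ∧ y ≤ a + n ∧ mod1 n y = mod1 n x := by
  induction a with
  | zero => exact ⟨mod1 n x, one_le_mod1 n x, by simpa using mod1_le hn x, mod1_mod1 n x⟩
  | succ a ih =>
    obtain ⟨y, hay, hya, hy⟩ := ih
    rcases (Nat.succ_le_of_lt hay).eq_or_lt with rfl | hlt
    · exact ⟨a + 1 + n, by omega, le_rfl, (mod1_add_self (by omega)).trans hy⟩
    · exact ⟨y, hlt, by omega, hy⟩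

lemma exists_le_mod1_eq {n a u v : ℕ} (hn : 0 < n) (ha : 1 ≤ a)
    (h : mod1 n a = mod1 n u ∨ mod1 n a = mod1 n v) :
    ∃ x y, a ≤ x ∧ x ≤ y ∧ y ≤ a + n ∧ mod1 n x = mod1 n u ∧ mod1 n y = mod1 n v := by
  rcases h with hu | hv
  · obtain ⟨y, hay, hya, hy⟩ := exists_mod1_eq_mem_Ioc hn a v
    exact ⟨a, y, le_rfl, hay.le, hya, hu, hy⟩
  · obtain ⟨x, hax, hxa, hx⟩ := exists_mod1_eq_mem_Ioc hn a u
    exact ⟨x, a + n, hax.le, hxa, le_rfl, hx, (mod1_add_self ha).trans hv⟩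

lemma exists_period_of_notMem_Vab {n α β v : ℕ} (hα : 1 ≤ α) (hv : v ∈ Finset.Icc α β)
    (hnv : v ∉ Vab n α β) : ∃ a, α ≤ a ∧ a + n ≤ β ∧ mod1 n a = mod1 n v := by
  simp only [Vab, Finset.mem_filter, not_and, not_forall, exists_prop] at hnv
  obtain ⟨v', hv', hmod, hne⟩ := hnv hv
  rw [Finset.mem_Icc] at hv hv'
  rcases Nat.lt_or_gt_of_ne hne with hlt | hlt
  · exact ⟨v', hv'.1, (add_le_of_mod1_eq (by omega) hlt hmod).trans hv.2, hmod⟩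
  · exact ⟨v, hv.1, (add_le_of_mod1_eq (by omega) hlt hmod.symm).trans hv'.2, rfl⟩

lemma exists_eq_of_mem_uIcc {f : ℕ → ℕ} {i j c : ℕ} (hij : i ≤ j)
    (hf : ∀ k, i ≤ k → k < j → f (k + 1) ≤ f k + 1 ∧ f k ≤ f (k + 1) + 1)
    (hc : c ∈ Set.uIcc (f i) (f j)) : ∃ k, i ≤ k ∧ k ≤ j ∧ f k = c := by
  induction j, hij using Nat.le_induction with
  | base => exact ⟨i, le_rfl, le_rfl, by simp_all⟩
  | succ j hij ih =>
    by_cases hcj : c ∈ Set.uIcc (f i) (f j)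
    · obtain ⟨k, hik, hkj, hk⟩ := ih (fun k hik hkj => hf k hik (by omega)) hcj
      exact ⟨k, hik, by omega, hk⟩
    · have := hf j hij (by omega)
      rw [Set.mem_uIcc] at hc hcj
      exact ⟨j + 1, by omega, le_rfl, by omega⟩

lemma exists_getElem?_eq_of_mem_uIcc {m : ℕ} {l : List ℕ} (hl : l.IsChain (pathAdj m))
    {i j a b c : ℕ} (hij : i ≤ j) (ha : l[i]? = some a) (hb : l[j]? = some b)
    (hc : c ∈ Set.uIcc a b) : ∃ k, i ≤ k ∧ k ≤ j ∧ l[k]? = some c := by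
  have hj : j < l.length := (List.getElem?_eq_some_iff.mp hb).1
  have hget : ∀ k (hk : k < l.length), (l[k]?).getD 0 = l[k] := fun k hk => by
    simp [List.getElem?_eq_getElem hk]
  obtain ⟨k, hik, hkj, hk⟩ := exists_eq_of_mem_uIcc (f := fun k => (l[k]?).getD 0) hij
    (fun k _ hkj => by
      have := (List.isChain_iff_getElem.mp hl k (by omega)).1
      rw [hget k (by omega), hget (k + 1) (by omega)]
      omega)
    (by simpa [ha, hb] using hc)
  refine ⟨k, hik, hkj, ?_⟩
  rw [hget k (by omega)] at hk
  rw [List.getElem?_eq_getElem (by omega), hk]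

lemma Satisfies.map {π : List ℕ} {s t : ℕ} (f : ℕ → ℕ) (h : Satisfies π s t) :
    Satisfies (π.map f) (f s) (f t) := by
  obtain ⟨i, j, hij, hi, hj⟩ := h
  exact ⟨i, j, hij, by simp [hi], by simp [hj]⟩

lemma Satisfies.of_mem_uIcc {m : ℕ} {π : List ℕ} (hπ : π.IsChain (pathAdj m)) {s t x y : ℕ}
    (h : Satisfies π s t) (hx : x ∈ Set.uIcc s t) (hy : y ∈ Set.uIcc x t) :
    Satisfies π x y := by
  obtain ⟨i₀, j₀, hij₀, hi₀, hj₀⟩ := h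
  obtain ⟨i, hi₀i, hij₀', hi⟩ := exists_getElem?_eq_of_mem_uIcc hπ hij₀ hi₀ hj₀ hx
  obtain ⟨j, hij, -, hj⟩ := exists_getElem?_eq_of_mem_uIcc hπ hij₀' hi hj₀ hy
  exact ⟨i, j, hij, hi, hj⟩

lemma satisfies_map_mod1_of_notMem_Vab {n m α β u v : ℕ} {π : List ℕ} (hn : 0 < n)
    (hπ : π.IsChain (pathAdj m)) (hα : 1 ≤ α)
    (hride : Satisfies π α β ∨ Satisfies π β α)
    (hu : u ∈ Finset.Icc α β) (hv : v ∈ Finset.Icc α β) (huv : u ∉ Vab n α β ∨ v ∉ Vab n α β) :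
    Satisfies (π.map (mod1 n)) (mod1 n u) (mod1 n v) := by
  obtain ⟨a, hαa, haβ, ha⟩ :
      ∃ a, α ≤ a ∧ a + n ≤ β ∧ (mod1 n a = mod1 n u ∨ mod1 n a = mod1 n v) := by
    rcases huv with h | h
    · obtain ⟨a, h₁, h₂, h₃⟩ := exists_period_of_notMem_Vab hα hu h
      exact ⟨a, h₁, h₂, Or.inl h₃⟩
    · obtain ⟨a, h₁, h₂, h₃⟩ := exists_period_of_notMem_Vab hα hv h
      exact ⟨a, h₁, h₂, Or.inr h₃⟩
  rcases hride with h | h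
  · obtain ⟨x, y, hax, hxy, hya, hx, hy⟩ := exists_le_mod1_eq hn (hα.trans hαa) ha
    rw [← hx, ← hy]
    exact (h.of_mem_uIcc hπ (Set.mem_uIcc_of_le (by omega) (by omega))
      (Set.mem_uIcc_of_le hxy (by omega))).map _
  · obtain ⟨y, x, hay, hyx, hxa, hy, hx⟩ := exists_le_mod1_eq hn (hα.trans hαa) ha.symm
    rw [← hx, ← hy]
    exact (h.of_mem_uIcc hπ (Set.mem_uIcc_of_ge (by omega) (by omega))
      (Set.mem_uIcc_of_ge (by omega) hyx)).map _

theorem project_feasible_general (n : ℕ) (hn : 3 ≤ n) (w : ℕ → ℕ → ℚ)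
    (t0 : ℕ) (C : Finset (ℕ × ℕ))
    (α β : ℕ) (hα : 1 ≤ α ∧ α ≤ 3 * n)
    (hcover : ∀ x ∈ VC C ∪ {1, t0}, ∃ v, α ≤ v ∧ v ≤ β ∧ mod1 n v = x)
    (vs0 vt0 : ℕ) (hvs0 : α ≤ vs0 ∧ vs0 ≤ β ∧ mod1 n vs0 = 1)
    (hvt0 : α ≤ vt0 ∧ vt0 ≤ β ∧ mod1 n vt0 = t0)
    (sc tc : ℕ) (hst : (sc, tc) = (α, β) ∨ (sc, tc) = (β, α))
    (πc : List ℕ)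
    (hfeas : Feasible ⟨pathAdj (3 * n), wPath n w, vs0, vt0,
        insert (sc, tc) (Cab n C α β)⟩ πc) :
    Feasible ⟨cycAdj n, w, 1, t0, C⟩ (πc.map (mod1 n)) := by
  obtain ⟨⟨hne, hchain⟩, hhead, hlast, hsat⟩ := hfeas
  have hn₀ : 0 < n := by omega
  refine ⟨⟨by simpa using hne, List.isChain_map _ |>.mpr
    (hchain.imp fun _ _ => cycAdj_mod1_of_pathAdj hn₀)⟩,
    by simp [hhead, hvs0.2.2], by simp [hlast, hvt0.2.2], fun r hr => ?_⟩
  obtain ⟨x, y⟩ := r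
  obtain ⟨u, hαu, huβ, rfl⟩ :=
    hcover x (Finset.mem_union_left _ (Finset.mem_union_left _ (Finset.mem_image_of_mem _ hr)))
  obtain ⟨v, hαv, hvβ, rfl⟩ :=
    hcover y (Finset.mem_union_left _ (Finset.mem_union_right _ (Finset.mem_image_of_mem _ hr)))
  have hu : u ∈ Finset.Icc α β := Finset.mem_Icc.mpr ⟨hαu, huβ⟩
  have hv : v ∈ Finset.Icc α β := Finset.mem_Icc.mpr ⟨hαv, hvβ⟩
  by_cases huv : u ∈ Vab n α β ∧ v ∈ Vab n α β
  · have hlift : (u, v) ∈ Cab n C α β :=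
      Finset.mem_filter.mpr ⟨Finset.mem_product.mpr ⟨hu, hv⟩, hr, huv⟩
    exact (hsat _ (Finset.mem_insert_of_mem hlift)).map _
  · have hride : Satisfies πc α β ∨ Satisfies πc β α := by
      rcases hst with h | h <;> obtain ⟨rfl, rfl⟩ := Prod.mk.inj h
      exacts [Or.inl (hsat _ (Finset.mem_insert_self _ _)),
        Or.inr (hsat _ (Finset.mem_insert_self _ _))]
    exact satisfies_map_mod1_of_notMem_Vab hn₀ hchain hα.1 hride hu hv (not_and_or.mp huv)

/-- a feasible ride for the unrolled path scenario projects, via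
`mod n`, to a feasible ride for the cycle scenario. -/
theorem project_feasible (n : ℕ) (hn : 3 ≤ n) (w : ℕ → ℕ → ℚ)
    (t0 : ℕ) (C : Finset (ℕ × ℕ)) (ht0 : 1 ≤ t0 ∧ t0 ≤ n)
    (hC : ∀ r ∈ C, 1 ≤ r.1 ∧ r.1 ≤ n ∧ 1 ≤ r.2 ∧ r.2 ≤ n)
    (α β : ℕ) (hαβ : α ≤ β) (hα : 1 ≤ α ∧ α ≤ 3 * n) (hβ : 1 ≤ β ∧ β ≤ 3 * n)
    (hmodα : mod1 n α ∈ VC C ∪ {1, t0}) (hmodβ : mod1 n β ∈ VC C ∪ {1, t0})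
    (hcover : ∀ x ∈ VC C ∪ {1, t0}, ∃ v, α ≤ v ∧ v ≤ β ∧ mod1 n v = x)
    (vs0 vt0 : ℕ) (hvs0 : α ≤ vs0 ∧ vs0 ≤ β ∧ mod1 n vs0 = 1)
    (hvt0 : α ≤ vt0 ∧ vt0 ≤ β ∧ mod1 n vt0 = t0)
    (sc tc : ℕ) (hst : (sc, tc) = (α, β) ∨ (sc, tc) = (β, α))
    (πc : List ℕ)
    (hfeas : Feasible ⟨pathAdj (3 * n), wPath n w, vs0, vt0,
        insert (sc, tc) (Cab n C α β)⟩ πc) :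
    Feasible ⟨cycAdj n, w, 1, t0, C⟩ (πc.map (mod1 n)) :=
  project_feasible_general n hn w t0 C α β hα hcover vs0 vt0 hvs0 hvt0 sc tc hst πc hfeas

end RideSharing
end
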